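/- arXiv:2506.05694 — 4 statements merged into one kernel-verified Lean document; each statement's English description precedes it below -/
import Mathlib

section
/- For a fixed interval-point function h : I[a,b] × [a,b] → X, the set function E ↦ μ_ρ(h, E) := inf over gauges δ of sup over δ-fine tagged partial partitions D of Σ_{([u,v],t)∈D} 1_E(t)·ρ(h([u,v],t))·1 is an outer measure on [a,b]: it is monotone, countably subadditive, and vanishes on the empty set. -/
open scoped ENNReal
open Filter MeasureTheory

noncomputable section

/-- A tagged partial partition of `[a,b]`: a finite list of triples `(u, v, t)` where
`[u,v] ⊆ [a,b]` is a nondegenerate closed subinterval with tag `t ∈ [u,v]`, and the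
subintervals are pairwise non-overlapping. -/
def IsPP (a b : ℝ) (D : List (ℝ × ℝ × ℝ)) : Prop :=
  (∀ p ∈ D, a ≤ p.1 ∧ p.1 < p.2.1 ∧ p.2.1 ≤ b ∧ p.1 ≤ p.2.2 ∧ p.2.2 ≤ p.2.1) ∧
  D.Pairwise (fun p q => p.2.1 ≤ q.1 ∨ q.2.1 ≤ p.1)

/-- `D` is `δ`-fine: each `[u,v] ⊆ (t - δ t, t + δ t)`. -/
def IsFine (δ : ℝ → ℝ) (D : List (ℝ × ℝ × ℝ)) : Prop :=
  ∀ p ∈ D, p.2.2 - δ p.2.2 < p.1 ∧ p.2.1 < p.2.2 + δ p.2.2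

/-- A (full) tagged partition of `[a,b]`: a tagged partial partition whose intervals
tile `[a,b]` (total length `b - a`). -/
def IsTP (a b : ℝ) (D : List (ℝ × ℝ × ℝ)) : Prop :=
  IsPP a b D ∧ (D.map (fun p => p.2.1 - p.1)).sum = b - a

/-- The sum `Σ_{([u,v],t) ∈ D} 1_E(t) · w(u,v,t)`. -/
def ppSum (E : Set ℝ) (w : ℝ → ℝ → ℝ → ℝ) (D : List (ℝ × ℝ × ℝ)) : ℝ :=
  (D.map (fun p => E.indicator (fun _ => w p.1 p.2.1 p.2.2) p.2.2)).sum

/-- The variational measure `μ(w, E)` : inf over gauges `δ` of the sup over `δ`-fine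
tagged partial partitions `D` of `Σ 1_E(t) w(u,v,t)`. -/
def varM (a b : ℝ) (w : ℝ → ℝ → ℝ → ℝ) (E : Set ℝ) : ℝ≥0∞ :=
  ⨅ δ : {δ : ℝ → ℝ // ∀ x, 0 < δ x},
    ⨆ D : {D : List (ℝ × ℝ × ℝ) // IsPP a b D ∧ IsFine δ.1 D},
      ENNReal.ofReal (ppSum E w D.1)

/-- Variant of the variational measure over full tagged partitions of `[a,b]`. -/
def varMFull (a b : ℝ) (w : ℝ → ℝ → ℝ → ℝ) : ℝ≥0∞ :=
  ⨅ δ : {δ : ℝ → ℝ // ∀ x, 0 < δ x},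
    ⨆ D : {D : List (ℝ × ℝ × ℝ) // IsTP a b D ∧ IsFine δ.1 D},
      ENNReal.ofReal ((D.1.map (fun p => w p.1 p.2.1 p.2.2)).sum)

variable {X : Type*}

/-- `μ_ρ(h, E)` for an `X`-valued interval-point function `h(u,v,t)`. -/
def varMh [AddCommGroup X] [Module ℝ X] (a b : ℝ) (ρ : Seminorm ℝ X)
    (h : ℝ → ℝ → ℝ → X) (E : Set ℝ) : ℝ≥0∞ :=
  varM a b (fun u v t => ρ (h u v t)) E

/-- `μ_ρ(Θ f, E)` where `Θf([u,v],t) = f(t)(v-u)`. -/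
def varTheta [AddCommGroup X] [Module ℝ X] (a b : ℝ) (ρ : Seminorm ℝ X)
    (f : ℝ → X) (E : Set ℝ) : ℝ≥0∞ :=
  varM a b (fun u v t => ρ (f t) * (v - u)) E

/-- `μ_ρ(Θ^p f, E)` where `Θ^p f([u,v],t) = ρ(f t)^p (v-u)`. -/
def varThetaP [AddCommGroup X] [Module ℝ X] (a b : ℝ) (ρ : Seminorm ℝ X)
    (p : ℝ) (f : ℝ → X) (E : Set ℝ) : ℝ≥0∞ :=
  varM a b (fun u v t => ρ (f t) ^ p * (v - u)) E

/-- The upper-integral seminorm `‖f‖_{U^p_ρ(A;X)} = μ_ρ(Θ^p f, A)^{1/p}`. -/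
def UNorm [AddCommGroup X] [Module ℝ X] (a b : ℝ) (ρ : Seminorm ℝ X)
    (p : ℝ) (f : ℝ → X) (A : Set ℝ) : ℝ≥0∞ :=
  varThetaP a b ρ p f A ^ (1 / p)

/-- Riemann-type sum `Σ_{([u,v],t) ∈ D} f(t)(v-u)`. -/
def rsum [AddCommGroup X] [Module ℝ X] (f : ℝ → X) (D : List (ℝ × ℝ × ℝ)) : X :=
  (D.map (fun p => (p.2.1 - p.1) • f p.2.2)).sum

/-- `z` is a `ρ`-Kurzweil–Henstock integral of `f` on `[a,b]`. -/
def IsKHIntegral [AddCommGroup X] [Module ℝ X] (a b : ℝ) (ρ : Seminorm ℝ X)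
    (f : ℝ → X) (z : X) : Prop :=
  ∀ ε : ℝ, 0 < ε → ∃ δ : ℝ → ℝ, (∀ x, 0 < δ x) ∧
    ∀ D : List (ℝ × ℝ × ℝ), IsTP a b D → IsFine δ D → ρ (rsum f D - z) < ε

section Aux

open scoped Classical

lemma ppSum_nonneg (E : Set ℝ) (w : ℝ → ℝ → ℝ → ℝ) (hw : ∀ u v t, 0 ≤ w u v t)
    (D : List (ℝ × ℝ × ℝ)) : 0 ≤ ppSum E w D := by
  apply List.sum_nonneg
  intro x hx
  simp only [List.mem_map] at hx
  obtain ⟨p, _, rfl⟩ := hx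
  exact Set.indicator_nonneg (fun _ _ => hw _ _ _) _

lemma ppSum_mono_set {E F : Set ℝ} (hEF : E ⊆ F) (w : ℝ → ℝ → ℝ → ℝ)
    (hw : ∀ u v t, 0 ≤ w u v t) (D : List (ℝ × ℝ × ℝ)) :
    ppSum E w D ≤ ppSum F w D := by
  apply List.sum_le_sum
  intro p _
  exact Set.indicator_le_indicator_of_subset hEF (fun _ => hw _ _ _) _

lemma ppSum_filter (A : Set ℝ) (w : ℝ → ℝ → ℝ → ℝ) (D : List (ℝ × ℝ × ℝ)) :
    ppSum A w D = ppSum A w (D.filter (fun p => decide (p.2.2 ∈ A))) := by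
  induction D with
  | nil => rfl
  | cons p D ih =>
    by_cases hp : p.2.2 ∈ A
    · rw [List.filter_cons, if_pos (by simpa using hp)]
      simp only [ppSum, List.map_cons, List.sum_cons] at ih ⊢
      rw [ih]
    · rw [List.filter_cons, if_neg (by simpa using hp)]
      simp only [ppSum, List.map_cons, List.sum_cons, Set.indicator_of_notMem hp] at ih ⊢
      rw [ih, zero_add]

lemma sum_map_finsetSum {α : Type*} (D : List α) (N : ℕ) (g : ℕ → α → ℝ) :
    ∑ n ∈ Finset.range N, (D.map (g n)).sum
      = (D.map (fun p => ∑ n ∈ Finset.range N, g n p)).sum := by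
  induction D with
  | nil => simp
  | cons p D ih => simp [List.map_cons, List.sum_cons, Finset.sum_add_distrib, ih]

lemma IsPP.sublist {a b : ℝ} {D D' : List (ℝ × ℝ × ℝ)} (hD : IsPP a b D)
    (hsub : D'.Sublist D) : IsPP a b D' :=
  ⟨fun p hp => hD.1 p (hsub.subset hp), hD.2.sublist hsub⟩

lemma IsFine.sublist {δ : ℝ → ℝ} {D D' : List (ℝ × ℝ × ℝ)} (hD : IsFine δ D)
    (hsub : D'.Sublist D) : IsFine δ D' :=
  fun p hp => hD p (hsub.subset hp)

end Aux

/-- `E ↦ μ_ρ(h, E)` is an outer measure on `[a,b]`. -/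
theorem stmt0 {X : Type*} [AddCommGroup X] [Module ℝ X] (ρ : Seminorm ℝ X)
    (a b : ℝ) (hab : a ≤ b) (h : ℝ → ℝ → ℝ → X) :
    varMh a b ρ h (∅ : Set ℝ) = 0 ∧
    (∀ E F : Set ℝ, E ⊆ F → varMh a b ρ h E ≤ varMh a b ρ h F) ∧
    (∀ E : ℕ → Set ℝ, varMh a b ρ h (⋃ n, E n) ≤ ∑' n, varMh a b ρ h (E n)) := by
  classical
  set w : ℝ → ℝ → ℝ → ℝ := fun u v t => ρ (h u v t) with hw_def
  have hw : ∀ u v t, 0 ≤ w u v t := fun u v t => apply_nonneg ρ _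
  refine ⟨?_, ?_, ?_⟩
  · -- empty set
    have : ∀ δ : {δ : ℝ → ℝ // ∀ x, 0 < δ x},
        (⨆ D : {D : List (ℝ × ℝ × ℝ) // IsPP a b D ∧ IsFine δ.1 D},
          ENNReal.ofReal (ppSum (∅ : Set ℝ) w D.1)) = 0 := by
      intro δ
      refine le_antisymm (iSup_le fun D => ?_) (zero_le)
      simp [ppSum]
    rw [varMh, varM]
    refine le_antisymm ?_ (zero_le)
    exact (iInf_le _ ⟨fun _ => 1, fun _ => one_pos⟩).trans (this _).le
  · -- monotone
    intro E F hEF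
    refine iInf_mono fun δ => iSup_mono fun D => ?_
    exact ENNReal.ofReal_le_ofReal (ppSum_mono_set hEF w hw D.1)
  · -- countable subadditivity
    intro E
    refine ENNReal.le_of_forall_pos_le_add fun ε hε hlt => ?_
    obtain ⟨ε', hε'pos, hε'sum⟩ :=
      ENNReal.exists_pos_sum_of_countable' (ε := (ε : ℝ≥0∞)) (by exact_mod_cast hε.ne') ℕ
    -- choose good gauges for each E n
    have hchoice : ∀ n : ℕ, ∃ δ : {δ : ℝ → ℝ // ∀ x, 0 < δ x},
        (⨆ D : {D : List (ℝ × ℝ × ℝ) // IsPP a b D ∧ IsFine δ.1 D},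
          ENNReal.ofReal (ppSum (E n) w D.1)) ≤ varMh a b ρ h (E n) + ε' n := by
      intro n
      have hfin : varMh a b ρ h (E n) ≠ ⊤ := by
        refine ne_top_of_le_ne_top hlt.ne (ENNReal.le_tsum n)
      have : varMh a b ρ h (E n) < varMh a b ρ h (E n) + ε' n :=
        ENNReal.lt_add_right hfin (hε'pos n).ne'
      rw [varMh, varM] at this ⊢
      obtain ⟨δ, hδ⟩ := iInf_lt_iff.mp this
      exact ⟨δ, hδ.le⟩
    choose δs hδs using hchoice
    set U : Set ℝ := ⋃ n, E n with hU_def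
    set nIdx : ℝ → ℕ := fun t =>
      if ht : t ∈ U then Nat.find (Set.mem_iUnion.mp ht) else 0 with hnIdx_def
    set A : ℕ → Set ℝ := fun n => {t | t ∈ E n ∧ nIdx t = n} with hA_def
    have hAsub : ∀ n, A n ⊆ E n := fun n t ht => ht.1
    have hmemA : ∀ t, t ∈ U → t ∈ A (nIdx t) := by
      intro t ht
      refine ⟨?_, rfl⟩
      have : nIdx t = Nat.find (Set.mem_iUnion.mp ht) := dif_pos ht
      rw [this]
      exact Nat.find_spec (Set.mem_iUnion.mp ht)
    have hAU : ∀ n, A n ⊆ U := fun n t ht => Set.mem_iUnion.mpr ⟨n, ht.1⟩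
    -- the combined gauge
    set δ0 : ℝ → ℝ := fun t => if t ∈ U then (δs (nIdx t)).1 t else 1 with hδ0_def
    have hδ0pos : ∀ x, 0 < δ0 x := by
      intro x
      by_cases hx : x ∈ U
      · simpa [δ0, hx] using (δs (nIdx x)).2 x
      · simp [δ0, hx]
    refine le_trans (iInf_le _ ⟨δ0, hδ0pos⟩) ?_
    refine iSup_le ?_
    rintro ⟨D, hPP, hFine⟩
    have hFine0 : IsFine δ0 D := hFine
    -- N bounding the indices appearing among the tags
    set N : ℕ := (D.map (fun p => nIdx p.2.2)).sum + 1 with hN_def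
    have hNlt : ∀ p ∈ D, nIdx p.2.2 < N := by
      intro p hp
      have : nIdx p.2.2 ≤ (D.map (fun p => nIdx p.2.2)).sum :=
        List.single_le_sum (fun x _ => Nat.zero_le x) _ (List.mem_map_of_mem hp)
      omega
    -- pointwise decomposition of the indicator
    have hpt : ∀ p ∈ D,
        Set.indicator U (fun _ => w p.1 p.2.1 p.2.2) p.2.2
          = ∑ n ∈ Finset.range N,
              Set.indicator (A n) (fun _ => w p.1 p.2.1 p.2.2) p.2.2 := by
      intro p hp
      by_cases ht : p.2.2 ∈ U
      · rw [Set.indicator_of_mem ht]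
        rw [Finset.sum_eq_single (nIdx p.2.2)]
        · rw [Set.indicator_of_mem (hmemA _ ht)]
        · intro n _ hn
          refine Set.indicator_of_notMem (fun hmem => hn ?_) _
          exact hmem.2.symm
        · intro hnot
          exact absurd (Finset.mem_range.mpr (hNlt p hp)) hnot
      · rw [Set.indicator_of_notMem ht, eq_comm]
        refine Finset.sum_eq_zero fun n _ => ?_
        exact Set.indicator_of_notMem (fun hmem => ht (hAU n hmem)) _
    have hdecomp : ppSum U w D
        = ∑ n ∈ Finset.range N, ppSum (A n) w D := by
      simp only [ppSum]
      rw [sum_map_finsetSum]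
      exact congrArg List.sum (List.map_congr_left hpt)
    calc ENNReal.ofReal (ppSum U w D)
        = ∑ n ∈ Finset.range N, ENNReal.ofReal (ppSum (A n) w D) := by
          rw [hdecomp, ENNReal.ofReal_sum_of_nonneg
            (fun n _ => ppSum_nonneg _ w hw D)]
      _ ≤ ∑ n ∈ Finset.range N, (varMh a b ρ h (E n) + ε' n) := by
          refine Finset.sum_le_sum fun n _ => ?_
          set Dn := D.filter (fun p => @decide (p.2.2 ∈ A n) (Classical.propDecidable _)) with hDn_def
          have hsub : Dn.Sublist D := List.filter_sublist
          have hPPn : IsPP a b Dn := hPP.sublist hsub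
          have hFinen : IsFine (δs n).1 Dn := by
            intro p hp
            have hpD : p ∈ D := hsub.subset hp
            have hpA : p.2.2 ∈ A n := by
              have := List.of_mem_filter hp
              simpa using this
            have hpU : p.2.2 ∈ U := hAU n hpA
            have hδ0eq : δ0 p.2.2 = (δs n).1 p.2.2 := by
              simp only [δ0, if_pos hpU, hpA.2]
            have := hFine0 p hpD
            rwa [hδ0eq] at this
          have h1 : ppSum (A n) w D = ppSum (A n) w Dn := by
            rw [hDn_def]; exact ppSum_filter _ _ _
          have h2 : ppSum (A n) w Dn ≤ ppSum (E n) w Dn :=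
            ppSum_mono_set (hAsub n) w hw Dn
          refine le_trans ?_ (hδs n)
          rw [h1]
          refine le_trans (ENNReal.ofReal_le_ofReal h2) ?_
          exact le_iSup (fun D' : {D' : List (ℝ × ℝ × ℝ) //
            IsPP a b D' ∧ IsFine (δs n).1 D'} =>
            ENNReal.ofReal (ppSum (E n) w D'.1)) ⟨Dn, hPPn, hFinen⟩
      _ ≤ ∑' n, (varMh a b ρ h (E n) + ε' n) := ENNReal.sum_le_tsum _
      _ = (∑' n, varMh a b ρ h (E n)) + ∑' n, ε' n := ENNReal.tsum_add
      _ ≤ (∑' n, varMh a b ρ h (E n)) + ε := add_le_add_right hε'sum.le _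
end
end

section
/- (Inclusion of upper integrable spaces.) If 1 ≤ p < q < ∞ and f ∈ U^q_ρ(A;X), then f ∈ U^p_ρ(A;X) and ‖f‖_{U^p_ρ(A;X)} ≤ m(A)^{1/p − 1/q} · ‖f‖_{U^q_ρ(A;X)}, where m(A) is the Lebesgue outer measure of A. -/
open scoped ENNReal
open Filter MeasureTheory

noncomputable section

variable {X : Type*}

lemma isPP_nodup {a b : ℝ} {D : List (ℝ × ℝ × ℝ)} (h : IsPP a b D) : D.Nodup := by
  refine h.2.imp_of_mem ?_
  intro r s hr hs hrs
  rintro rfl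
  have := (h.1 r hr).2.1
  rcases hrs with h1 | h1 <;> linarith

lemma ppSum_nonneg_s13 {E : Set ℝ} {w : ℝ → ℝ → ℝ → ℝ} {D : List (ℝ × ℝ × ℝ)}
    (h : ∀ r ∈ D, 0 ≤ w r.1 r.2.1 r.2.2) : 0 ≤ ppSum E w D := by
  refine List.sum_nonneg fun x hx => ?_
  obtain ⟨r, hr, rfl⟩ := List.mem_map.mp hx
  exact Set.indicator_nonneg (fun _ _ => h r hr) _

lemma length_bound {a b : ℝ} {A G : Set ℝ} {D : List (ℝ × ℝ × ℝ)} (hPP : IsPP a b D)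
    (hG : ∀ r ∈ D, r.2.2 ∈ A → Set.Ioo r.1 r.2.1 ⊆ G) :
    ENNReal.ofReal (∑ r ∈ D.toFinset,
      Set.indicator A (fun _ => max (r.2.1 - r.1) 0) r.2.2) ≤ volume G := by
  classical
  have hsub : ∀ r ∈ D.toFinset, r ∈ D := fun r hr => List.mem_toFinset.mp hr
  rw [show (∑ r ∈ D.toFinset, Set.indicator A (fun _ => max (r.2.1 - r.1) 0) r.2.2)
      = ∑ r ∈ D.toFinset.filter (fun r => r.2.2 ∈ A), (r.2.1 - r.1) from ?_]
  · set s := D.toFinset.filter (fun r => r.2.2 ∈ A) with hs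
    have hmem : ∀ r ∈ s, r ∈ D ∧ r.2.2 ∈ A := by
      intro r hr
      rw [hs, Finset.mem_filter] at hr
      exact ⟨hsub r hr.1, hr.2⟩
    rw [ENNReal.ofReal_sum_of_nonneg]
    · have : ∀ r ∈ s, ENNReal.ofReal (r.2.1 - r.1) = volume (Set.Ioo r.1 r.2.1) := by
        intro r _; rw [Real.volume_Ioo]
      rw [Finset.sum_congr rfl this, ← measure_biUnion_finset]
      · exact measure_mono (Set.iUnion₂_subset fun r hr => hG r (hmem r hr).1 (hmem r hr).2)
      · intro r hr t ht hrt
        haveI : Std.Symm (fun p q : ℝ × ℝ × ℝ => p.2.1 ≤ q.1 ∨ q.2.1 ≤ p.1) :=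
          ⟨fun _ _ h => h.symm⟩
        have h1 := hPP.2.forall (hmem r hr).1 (hmem t ht).1 hrt
        refine Set.disjoint_left.mpr fun x hx hx' => ?_
        simp only [Set.mem_Ioo] at hx hx'
        rcases h1 with h1 | h1 <;> linarith
      · intro r _; exact measurableSet_Ioo
    · intro r hr
      have := (hPP.1 r (hmem r hr).1).2.1
      linarith
  · rw [Finset.sum_filter]
    refine Finset.sum_congr rfl fun r hr => ?_
    have huv := (hPP.1 r (hsub r hr)).2.1
    by_cases hrA : r.2.2 ∈ A
    · simp [Set.indicator_of_mem hrA, hrA, max_eq_left (by linarith : (0:ℝ) ≤ r.2.1 - r.1)]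
    · simp [Set.indicator_of_notMem hrA, hrA]

lemma partition_bound {a b : ℝ} (A : Set ℝ) (g : ℝ → ℝ) (hg : ∀ t, 0 ≤ g t)
    {D : List (ℝ × ℝ × ℝ)} (hPP : IsPP a b D) {p q : ℝ} (hp : 0 < p) (hpq : p < q) :
    ppSum A (fun u v t => g t ^ p * (v - u)) D ≤
      (∑ r ∈ D.toFinset, Set.indicator A (fun _ => max (r.2.1 - r.1) 0) r.2.2) ^ (1 - p/q)
      * (ppSum A (fun u v t => g t ^ q * (v - u)) D) ^ (p/q) := by
  classical
  set W : ℝ × ℝ × ℝ → ℝ := fun r => Set.indicator A (fun _ => max (r.2.1 - r.1) 0) r.2.2 with hWdef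
  set F : ℝ × ℝ × ℝ → ℝ := fun r => (Set.indicator A (fun _ => g r.2.2) r.2.2) ^ p with hFdef
  have hW : ∀ r, 0 ≤ W r := fun r => Set.indicator_nonneg (fun _ _ => le_max_right _ _) _
  have hind : ∀ r : ℝ × ℝ × ℝ, 0 ≤ Set.indicator A (fun _ => g r.2.2) r.2.2 :=
    fun r => Set.indicator_nonneg (fun _ _ => hg _) _
  have hF : ∀ r, 0 ≤ F r := fun r => Real.rpow_nonneg (hind r) _
  have hnd := isPP_nodup hPP
  have hFpow : ∀ r, F r ^ (q / p) = (Set.indicator A (fun _ => g r.2.2) r.2.2) ^ q := by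
    intro r
    rw [hFdef, ← Real.rpow_mul (hind r), mul_comm, div_mul_cancel₀ q hp.ne']
  have e1 : ∀ r ∈ D, Set.indicator A (fun _ => g r.2.2 ^ p * (r.2.1 - r.1)) r.2.2
      = W r * F r := by
    intro r hr
    have huv := (hPP.1 r hr).2.1
    by_cases hrA : r.2.2 ∈ A
    · simp only [hWdef, hFdef, Set.indicator_of_mem hrA,
        max_eq_left (by linarith : (0:ℝ) ≤ r.2.1 - r.1)]
      ring
    · simp [hWdef, hFdef, Set.indicator_of_notMem hrA]
  have e2 : ∀ r ∈ D, Set.indicator A (fun _ => g r.2.2 ^ q * (r.2.1 - r.1)) r.2.2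
      = W r * F r ^ (q / p) := by
    intro r hr
    have huv := (hPP.1 r hr).2.1
    rw [hFpow r]
    by_cases hrA : r.2.2 ∈ A
    · simp only [hWdef, Set.indicator_of_mem hrA,
        max_eq_left (by linarith : (0:ℝ) ≤ r.2.1 - r.1)]
      ring
    · simp [hWdef, Set.indicator_of_notMem hrA]
  have s1 : ppSum A (fun u v t => g t ^ p * (v - u)) D = ∑ r ∈ D.toFinset, W r * F r := by
    rw [ppSum, List.sum_toFinset _ hnd]
    exact congrArg List.sum (List.map_congr_left e1)
  have s2 : ppSum A (fun u v t => g t ^ q * (v - u)) D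
      = ∑ r ∈ D.toFinset, W r * F r ^ (q / p) := by
    rw [ppSum, List.sum_toFinset _ hnd]
    exact congrArg List.sum (List.map_congr_left e2)
  rw [s1, s2]
  have hQ : 1 ≤ q / p := (one_le_div hp).mpr hpq.le
  have := Real.inner_le_weight_mul_Lp_of_nonneg D.toFinset hQ W F hW hF
  rw [inv_div] at this
  exact this

/-- inclusion of upper integrable spaces, with the norm estimate
`‖f‖_{U^p} ≤ m(A)^{1/p - 1/q} ‖f‖_{U^q}`. -/
theorem stmt13 {X : Type*} [AddCommGroup X] [Module ℝ X] (ρ : Seminorm ℝ X)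
    (a b : ℝ) (A : Set ℝ) (hA : A ⊆ Set.Icc a b) (p q : ℝ)
    (hp : 1 ≤ p) (hpq : p < q) (f : ℝ → X)
    (hf : varThetaP a b ρ q f A ≠ ⊤) :
    varThetaP a b ρ p f A ≠ ⊤ ∧
    UNorm a b ρ p f A ≤
      MeasureTheory.volume A ^ (1 / p - 1 / q) * UNorm a b ρ q f A := by
  classical
  have hp0 : 0 < p := lt_of_lt_of_le one_pos hp
  have hq0 : 0 < q := hp0.trans hpq
  have hm : volume A ≠ ⊤ := by
    refine ((measure_mono hA).trans_lt ?_).ne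
    rw [Real.volume_Icc]; exact ENNReal.ofReal_lt_top
  set mr := (volume A).toReal with hmr
  set Mqr := (varThetaP a b ρ q f A).toReal with hMqr
  have hmr0 : 0 ≤ mr := ENNReal.toReal_nonneg
  have hMqr0 : 0 ≤ Mqr := ENNReal.toReal_nonneg
  have he1 : 0 ≤ 1 - p / q := by
    rw [sub_nonneg]; exact (div_le_one hq0).mpr hpq.le
  have he2 : 0 ≤ p / q := by positivity
  set c := mr ^ (1 - p/q) * Mqr ^ (p/q) with hc
  have hc0 : 0 ≤ c := mul_nonneg (Real.rpow_nonneg hmr0 _) (Real.rpow_nonneg hMqr0 _)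
  -- the per-ε bound
  have perE : ∀ ε : ℝ, 0 < ε → varThetaP a b ρ p f A ≤
      ENNReal.ofReal ((mr + ε) ^ (1 - p/q) * (Mqr + ε) ^ (p/q)) := by
    intro ε hε
    have hεne : ENNReal.ofReal ε ≠ 0 := (ENNReal.ofReal_pos.mpr hε).ne'
    -- gauge for q
    have h1 : varThetaP a b ρ q f A < varThetaP a b ρ q f A + ENNReal.ofReal ε :=
      ENNReal.lt_add_right hf hεne
    have h1' : (⨅ δ : {δ : ℝ → ℝ // ∀ x, 0 < δ x},
        ⨆ D : {D : List (ℝ × ℝ × ℝ) // IsPP a b D ∧ IsFine δ.1 D},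
          ENNReal.ofReal (ppSum A (fun u v t => ρ (f t) ^ q * (v - u)) D.1))
        < varThetaP a b ρ q f A + ENNReal.ofReal ε := h1
    obtain ⟨δq, hδq⟩ := iInf_lt_iff.mp h1'
    -- open set
    have h3 : volume A < volume A + ENNReal.ofReal ε := ENNReal.lt_add_right hm hεne
    obtain ⟨G, hGA, hGopen, hGvol⟩ := A.exists_isOpen_lt_of_lt _ h3
    have h4 : ∀ t, t ∈ A → ∃ r, 0 < r ∧ Set.Ioo (t - r) (t + r) ⊆ G := by
      intro t ht
      obtain ⟨r, hr0, hrball⟩ := Metric.isOpen_iff.mp hGopen t (hGA ht)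
      exact ⟨r, hr0, by rw [← Real.ball_eq_Ioo]; exact hrball⟩
    choose! rG hrG0 hrGsub using h4
    set δG : ℝ → ℝ := fun t => if t ∈ A then rG t else 1 with hδG
    have hδGpos : ∀ t, 0 < δG t := by
      intro t; rw [hδG]; dsimp only
      split_ifs with h
      · exact hrG0 t h
      · exact one_pos
    set δ : ℝ → ℝ := fun t => min (δq.1 t) (δG t) with hδ
    have hδpos : ∀ t, 0 < δ t := fun t => lt_min (δq.2 t) (hδGpos t)
    have step : varThetaP a b ρ p f A ≤
        ⨆ D : {D : List (ℝ × ℝ × ℝ) // IsPP a b D ∧ IsFine δ D},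
          ENNReal.ofReal (ppSum A (fun u v t => ρ (f t) ^ p * (v - u)) D.1) :=
      iInf_le _ (⟨δ, hδpos⟩ : {δ : ℝ → ℝ // ∀ x, 0 < δ x})
    refine step.trans (iSup_le ?_)
    rintro ⟨D, hPP, hfine⟩
    dsimp only
    -- D is δq-fine
    have hfineq : IsFine δq.1 D := by
      intro r hr
      obtain ⟨h5, h6⟩ := hfine r hr
      have := min_le_left (δq.1 r.2.2) (δG r.2.2)
      constructor <;> [skip; skip] <;> rw [hδ] at h5 h6 <;> dsimp only at h5 h6 <;> linarith
    -- bound on q-sum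
    have hSq : ppSum A (fun u v t => ρ (f t) ^ q * (v - u)) D ≤ Mqr + ε := by
      have h7 : ENNReal.ofReal (ppSum A (fun u v t => ρ (f t) ^ q * (v - u)) D)
          ≤ varThetaP a b ρ q f A + ENNReal.ofReal ε := by
        refine le_trans ?_ hδq.le
        exact le_iSup (fun D : {D : List (ℝ × ℝ × ℝ) // IsPP a b D ∧ IsFine δq.1 D} =>
          ENNReal.ofReal (ppSum A (fun u v t => ρ (f t) ^ q * (v - u)) D.1)) ⟨D, hPP, hfineq⟩
      have hne : varThetaP a b ρ q f A + ENNReal.ofReal ε ≠ ⊤ :=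
        ENNReal.add_ne_top.mpr ⟨hf, ENNReal.ofReal_ne_top⟩
      have := (ENNReal.ofReal_le_iff_le_toReal hne).mp h7
      rwa [ENNReal.toReal_add hf ENNReal.ofReal_ne_top, ENNReal.toReal_ofReal hε.le] at this
    -- bound on length sum
    have hL : (∑ r ∈ D.toFinset, Set.indicator A (fun _ => max (r.2.1 - r.1) 0) r.2.2)
        ≤ mr + ε := by
      have h8 : ∀ r ∈ D, r.2.2 ∈ A → Set.Ioo r.1 r.2.1 ⊆ G := by
        intro r hr hrA
        obtain ⟨h5, h6⟩ := hfine r hr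
        have hmin : δ r.2.2 ≤ δG r.2.2 := min_le_right _ _
        have hG' : δG r.2.2 = rG r.2.2 := by rw [hδG]; exact if_pos hrA
        refine Set.Subset.trans (Set.Ioo_subset_Ioo ?_ ?_) (hrGsub r.2.2 hrA) <;>
          rw [← hG'] <;> linarith
      have h9 := (length_bound hPP h8).trans (hGvol.le.trans le_rfl)
      have hne : volume A + ENNReal.ofReal ε ≠ ⊤ :=
        ENNReal.add_ne_top.mpr ⟨hm, ENNReal.ofReal_ne_top⟩
      have := (ENNReal.ofReal_le_iff_le_toReal hne).mp h9
      rwa [ENNReal.toReal_add hm ENNReal.ofReal_ne_top, ENNReal.toReal_ofReal hε.le] at this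
    -- Hölder
    have hHol := partition_bound A (fun t => ρ (f t)) (fun t => apply_nonneg ρ (f t)) hPP hp0 hpq
    refine ENNReal.ofReal_le_ofReal (hHol.trans ?_)
    have hL0 : 0 ≤ ∑ r ∈ D.toFinset, Set.indicator A (fun _ => max (r.2.1 - r.1) 0) r.2.2 :=
      Finset.sum_nonneg fun r _ => Set.indicator_nonneg (fun _ _ => le_max_right _ _) _
    have hSq0 : 0 ≤ ppSum A (fun u v t => ρ (f t) ^ q * (v - u)) D := by
      refine ppSum_nonneg_s13 fun r hr => ?_
      exact mul_nonneg (Real.rpow_nonneg (apply_nonneg ρ _) _)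
        (by linarith [(hPP.1 r hr).2.1])
    exact mul_le_mul (Real.rpow_le_rpow hL0 hL he1) (Real.rpow_le_rpow hSq0 hSq he2)
      (Real.rpow_nonneg hSq0 _) (Real.rpow_nonneg (by linarith) _)
  -- pass to the limit ε → 0
  have key : varThetaP a b ρ p f A ≤ ENNReal.ofReal c := by
    refine ENNReal.le_of_forall_pos_le_add fun η hη _ => ?_
    have hcont : ContinuousAt (fun ε : ℝ => (mr + ε) ^ (1 - p/q) * (Mqr + ε) ^ (p/q)) 0 := by
      refine ContinuousAt.mul ?_ ?_
      · exact (Real.continuousAt_rpow_const _ _ (Or.inr he1)).comp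
          ((continuous_const.add continuous_id).continuousAt)
      · exact (Real.continuousAt_rpow_const _ _ (Or.inr he2)).comp
          ((continuous_const.add continuous_id).continuousAt)
    have hval : (fun ε : ℝ => (mr + ε) ^ (1 - p/q) * (Mqr + ε) ^ (p/q)) 0 = c := by
      simp [hc]
    have htend : Tendsto (fun ε : ℝ => (mr + ε) ^ (1 - p/q) * (Mqr + ε) ^ (p/q)) (nhds 0)
        (nhds c) := hval ▸ hcont.tendsto
    have hη' : c < c + (η : ℝ) := by
      have : (0:ℝ) < η := hη
      linarith
    have hev := (htend.eventually_lt_const hη').filter_mono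
      (nhdsWithin_le_nhds : nhdsWithin (0:ℝ) (Set.Ioi 0) ≤ nhds 0)
    have hpos : ∀ᶠ ε in nhdsWithin (0:ℝ) (Set.Ioi 0), 0 < ε :=
      eventually_mem_nhdsWithin.mono fun x hx => hx
    obtain ⟨ε, hεlt, hε0⟩ := (hev.and hpos).exists
    calc varThetaP a b ρ p f A
        ≤ ENNReal.ofReal ((mr + ε) ^ (1 - p/q) * (Mqr + ε) ^ (p/q)) := perE ε hε0
      _ ≤ ENNReal.ofReal (c + (η : ℝ)) := ENNReal.ofReal_le_ofReal hεlt.le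
      _ ≤ ENNReal.ofReal c + ENNReal.ofReal (η : ℝ) := ENNReal.ofReal_add_le
      _ = ENNReal.ofReal c + η := by rw [ENNReal.ofReal_coe_nnreal]
  refine ⟨ne_top_of_le_ne_top ENNReal.ofReal_ne_top key, ?_⟩
  have hstep : UNorm a b ρ p f A ≤ ENNReal.ofReal c ^ (1/p) :=
    ENNReal.rpow_le_rpow key (one_div_nonneg.mpr hp0.le)
  refine hstep.trans ?_
  have heq : ENNReal.ofReal c ^ (1/p) =
      MeasureTheory.volume A ^ (1 / p - 1 / q) * UNorm a b ρ q f A := by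
    have h1q : (0:ℝ) ≤ 1/q := (one_div_nonneg.mpr hq0.le)
    have hepq : (0:ℝ) ≤ 1/p - 1/q := by
      rw [sub_nonneg]
      exact one_div_le_one_div_of_le hp0 hpq.le
    have hx1 : (1 - p/q) * (1/p) = 1/p - 1/q := by
      rw [sub_mul, one_mul, div_mul_div_comm, mul_one]
      congr 1
      rw [mul_comm, ← div_div, div_self hp0.ne']
    have hx2 : (p/q) * (1/p) = 1/q := by
      rw [div_mul_div_comm, mul_one, mul_comm, ← div_div, div_self hp0.ne']
    rw [ENNReal.ofReal_rpow_of_nonneg hc0 (one_div_nonneg.mpr hp0.le)]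
    rw [hc, Real.mul_rpow (Real.rpow_nonneg hmr0 _) (Real.rpow_nonneg hMqr0 _),
      ← Real.rpow_mul hmr0, ← Real.rpow_mul hMqr0, hx1, hx2,
      ENNReal.ofReal_mul (Real.rpow_nonneg hmr0 _),
      ← ENNReal.ofReal_rpow_of_nonneg hmr0 hepq,
      ← ENNReal.ofReal_rpow_of_nonneg hMqr0 h1q,
      hmr, hMqr, ENNReal.ofReal_toReal hm, ENNReal.ofReal_toReal hf]
    rfl
  exact heq.le
end
end

section
/- (Pointwise a.e. Cauchyness of rapidly Cauchy sequences.) Let (X,ρ) be a semi-normed space, 1 ≤ p < ∞, and {f_n} a sequence in U^p_ρ([a,b];X) such that there is a convergent series Σ ε_k of positive numbers with ‖f_{k+1} − f_k‖_{U^p_ρ} < ε_k^2 for all k. Then there is a Lebesgue-null set E ⊆ [a,b] such that for every x ∈ [a,b] ∖ E, the sequence {f_n(x)} is Cauchy in (X,ρ). -/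
open scoped ENNReal
open Filter MeasureTheory

noncomputable section

variable {X : Type*}

section Auxiliary

open Metric Set

variable {X : Type*}

lemma seminorm_sum_le' [AddCommGroup X] [Module ℝ X] (ρ : Seminorm ℝ X)
    {ι : Type*} (s : Finset ι) (g : ι → X) : ρ (∑ i ∈ s, g i) ≤ ∑ i ∈ s, ρ (g i) := by
  classical
  induction s using Finset.cons_induction with
  | empty => simp
  | cons i s hi ih =>
    rw [Finset.sum_cons, Finset.sum_cons]
    exact (map_add_le_add ρ _ _).trans (by gcongr)

lemma telescope_sub {X : Type*} [AddCommGroup X] (f : ℕ → X) {n m : ℕ} (h : n ≤ m) :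
    f m - f n = ∑ k ∈ Finset.Ico n m, (f (k + 1) - f k) := by
  induction m, h using Nat.le_induction with
  | base => simp
  | succ m hm ih =>
    rw [Finset.sum_Ico_succ_top (by omega), ← ih]
    abel

/-- The key covering estimate: the Lebesgue outer measure of a set `E ⊆ [a,b]` is at most
`8` times the supremum of `ppSum E (v-u)` over `δ`-fine partial partitions. -/
lemma vol_le_sup (a b : ℝ) (hab : a < b) (E : Set ℝ) (hE : E ⊆ Set.Icc a b)
    (δ : ℝ → ℝ) (hδ : ∀ x, 0 < δ x) :
    volume E ≤ 8 * ⨆ D : {D : List (ℝ × ℝ × ℝ) // IsPP a b D ∧ IsFine δ D},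
      ENNReal.ofReal (ppSum E (fun u v _ => v - u) D.1) := by
  classical
  set S := ⨆ D : {D : List (ℝ × ℝ × ℝ) // IsPP a b D ∧ IsFine δ D},
      ENNReal.ofReal (ppSum E (fun u v _ => v - u) D.1) with hS
  have hba : 0 < b - a := by linarith
  set r : ℝ → ℝ := fun x => min (δ x) (b - a) / 2 with hrdef
  have hr0 : ∀ x, 0 < r x := fun x => by
    have := hδ x
    simp only [hrdef]
    positivity
  have hrδ : ∀ x, r x < δ x := fun x => by
    have h1 : r x ≤ δ x / 2 := by
      simp only [hrdef]
      gcongr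
      exact min_le_left _ _
    have := hδ x
    linarith
  have hrba : ∀ x, r x ≤ (b - a) / 2 := fun x => by
    simp only [hrdef]
    gcongr
    exact min_le_right _ _
  obtain ⟨u, huE, hdisj, hcov⟩ :=
    Vitali.exists_disjoint_subfamily_covering_enlargement_closedBall E id r ((b - a) / 2)
      (fun x _ => hrba x) 4 (by norm_num)
  have hucnt : u.Countable := by
    apply hdisj.countable_of_nonempty_interior
    intro y hy
    simp only [id_eq]
    rw [interior_closedBall y (hr0 y).ne']
    exact ⟨y, mem_ball_self (hr0 y)⟩
  set U : ℝ → ℝ := fun y => max a (y - r y) with hUdef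
  set V : ℝ → ℝ := fun y => min b (y + r y) with hVdef
  have hyab : ∀ y ∈ E, a ≤ y ∧ y ≤ b := fun y hy => ⟨(hE hy).1, (hE hy).2⟩
  have hUy : ∀ y ∈ E, U y ≤ y := fun y hy =>
    max_le (hyab y hy).1 (by have := (hr0 y).le; linarith)
  have hyV : ∀ y ∈ E, y ≤ V y := fun y hy =>
    le_min (hyab y hy).2 (by have := (hr0 y).le; linarith)
  have haU : ∀ y, a ≤ U y := fun y => le_max_left _ _
  have hVb : ∀ y, V y ≤ b := fun y => min_le_left _ _
  have hUV : ∀ y ∈ E, U y < V y := by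
    intro y hy
    obtain ⟨h1, h2⟩ := hyab y hy
    have h3 := hr0 y
    exact max_lt (lt_min (by linarith) (by linarith)) (lt_min (by linarith) (by linarith))
  have hIcc_ball : ∀ y, Set.Icc (U y) (V y) ⊆ closedBall y (r y) := by
    intro y
    rw [Real.closedBall_eq_Icc]
    exact Set.Icc_subset_Icc (le_max_right _ _) (min_le_right _ _)
  have hrVU : ∀ y ∈ E, r y ≤ V y - U y := by
    intro y hy
    obtain ⟨h1, h2⟩ := hyab y hy
    have h3 := hr0 y
    have h4 := hrba y
    rcases le_or_gt a (y - r y) with h | h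
    · have hU : U y = y - r y := max_eq_right h
      have hV : y ≤ V y := hyV y hy
      rw [hU]; linarith
    · have hU : U y = a := max_eq_left h.le
      rcases le_or_gt (y + r y) b with h' | h'
      · have hV : V y = y + r y := min_eq_right h'
        rw [hU, hV]; linarith
      · have hV : V y = b := min_eq_left h'.le
        rw [hU, hV]; linarith
  have hcover : E ⊆ ⋃ y ∈ u, closedBall y (4 * r y) := by
    intro x hx
    obtain ⟨y, hyu, hsub⟩ := hcov x hx
    exact Set.mem_biUnion hyu (hsub (mem_closedBall_self (hr0 x).le))
  have hvol : volume E ≤ ∑' y : u, volume (closedBall (y : ℝ) (4 * r (y : ℝ))) :=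
    (measure_mono hcover).trans (measure_biUnion_le volume hucnt _)
  have hvol2 : volume E ≤ ∑' y : u, ENNReal.ofReal (8 * r (y : ℝ)) := by
    refine hvol.trans_eq (tsum_congr fun y => ?_)
    rw [Real.volume_closedBall]
    ring_nf
  refine hvol2.trans ?_
  rw [ENNReal.tsum_eq_iSup_sum]
  refine iSup_le fun F => ?_
  set D : List (ℝ × ℝ × ℝ) := F.toList.map (fun y : u => (U y.1, V y.1, y.1)) with hDdef
  have hmemE : ∀ y : u, (y : ℝ) ∈ E := fun y => huE y.2
  have hPP : IsPP a b D ∧ IsFine δ D := by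
    refine ⟨⟨?_, ?_⟩, ?_⟩
    · intro q hq
      simp only [hDdef, List.mem_map] at hq
      obtain ⟨y, _, rfl⟩ := hq
      exact ⟨haU _, hUV _ (hmemE y), hVb _, hUy _ (hmemE y), hyV _ (hmemE y)⟩
    · rw [hDdef, List.pairwise_map]
      refine F.nodup_toList.pairwise_of_forall_ne fun y hy z hz hyz => ?_
      by_contra hcon
      push_neg at hcon
      obtain ⟨h1, h2⟩ := hcon
      simp only [not_le] at h1 h2
      have hy1 := hmemE y
      have hz1 := hmemE z
      have hmy : max (U y.1) (U z.1) ∈ Set.Icc (U y.1) (V y.1) :=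
        ⟨le_max_left _ _, max_le (hUV _ hy1).le h1.le⟩
      have hmz : max (U y.1) (U z.1) ∈ Set.Icc (U z.1) (V z.1) :=
        ⟨le_max_right _ _, max_le h2.le (hUV _ hz1).le⟩
      have hne : (y : ℝ) ≠ (z : ℝ) := fun h => hyz (Subtype.coe_injective h)
      have hd := hdisj y.2 z.2 hne
      exact Set.disjoint_left.mp hd (hIcc_ball _ hmy) (hIcc_ball _ hmz)
    · intro q hq
      simp only [hDdef, List.mem_map] at hq
      obtain ⟨y, _, rfl⟩ := hq
      have h1 := hrδ (y : ℝ)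
      refine ⟨lt_of_lt_of_le (by simp only; linarith) (le_max_right a _),
        lt_of_le_of_lt (min_le_right _ _) (by simp only; linarith)⟩
  have hppSum : ppSum E (fun u v _ => v - u) D = ∑ y ∈ F, (V (y : ℝ) - U (y : ℝ)) := by
    rw [ppSum, hDdef, List.map_map, Finset.sum_map_toList]
    refine Finset.sum_congr rfl fun y _ => ?_
    simp only [Function.comp_apply]
    exact Set.indicator_of_mem (hmemE y) _
  have hsum_le : ∑ y ∈ F, 8 * r (y : ℝ) ≤ 8 * ppSum E (fun u v _ => v - u) D := by
    rw [hppSum, Finset.mul_sum]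
    refine Finset.sum_le_sum fun y _ => ?_
    have := hrVU _ (hmemE y)
    linarith
  calc ∑ y ∈ F, ENNReal.ofReal (8 * r (y : ℝ))
      = ENNReal.ofReal (∑ y ∈ F, 8 * r (y : ℝ)) := by
        rw [ENNReal.ofReal_sum_of_nonneg]
        intro y _
        have := hr0 (y : ℝ)
        positivity
    _ ≤ ENNReal.ofReal (8 * ppSum E (fun u v _ => v - u) D) := ENNReal.ofReal_le_ofReal hsum_le
    _ = ENNReal.ofReal 8 * ENNReal.ofReal (ppSum E (fun u v _ => v - u) D) := by
        rw [ENNReal.ofReal_mul]; norm_num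
    _ ≤ 8 * S := by
        rw [show ENNReal.ofReal 8 = (8 : ℝ≥0∞) by norm_num]
        gcongr
        exact le_iSup (fun D : {D : List (ℝ × ℝ × ℝ) // IsPP a b D ∧ IsFine δ D} =>
          ENNReal.ofReal (ppSum E (fun u v _ => v - u) D.1)) ⟨D, hPP⟩

end Auxiliary

/-- a rapidly Cauchy sequence in `U^p_ρ([a,b];X)` is pointwise
Cauchy almost everywhere on `[a,b]`. -/
theorem stmt17 {X : Type*} [AddCommGroup X] [Module ℝ X] (ρ : Seminorm ℝ X)
    (a b : ℝ) (p : ℝ) (hp : 1 ≤ p) (f : ℕ → ℝ → X)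
    (hfin : ∀ n, varThetaP a b ρ p (f n) (Set.Icc a b) ≠ ⊤)
    (ε : ℕ → ℝ) (hεpos : ∀ k, 0 < ε k) (hεsum : Summable ε)
    (hrapid : ∀ k, UNorm a b ρ p (f (k + 1) - f k) (Set.Icc a b) <
      ENNReal.ofReal ((ε k) ^ 2)) :
    ∃ E : Set ℝ, MeasureTheory.volume E = 0 ∧
      ∀ x ∈ Set.Icc a b \ E, ∀ η : ℝ, 0 < η →
        ∃ N : ℕ, ∀ m ≥ N, ∀ n ≥ N, ρ (f m x - f n x) < η := by
  classical
  have hp0 : (0 : ℝ) < p := lt_of_lt_of_le one_pos hp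
  rcases le_or_gt b a with hba | hab
  · -- degenerate interval
    refine ⟨Set.Icc a b, ?_, ?_⟩
    · rcases lt_or_eq_of_le hba with h | h
      · rw [Set.Icc_eq_empty (by linarith)]; simp
      · rw [h, Set.Icc_self]; exact Real.volume_singleton
    · intro x hx
      exact absurd hx.1 hx.2
  -- main case
  set g : ℕ → ℝ → X := fun k => f (k + 1) - f k with hg
  set Ek : ℕ → Set ℝ := fun k => Set.Icc a b ∩ {x | ε k ^ p ≤ ρ (g k x) ^ p} with hEk
  -- Step 1: bound on varThetaP of increments
  have hTP : ∀ k, varThetaP a b ρ p (g k) (Set.Icc a b) < ENNReal.ofReal ((ε k ^ 2) ^ p) := by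
    intro k
    have h1 := ENNReal.rpow_lt_rpow (hrapid k) hp0
    rw [UNorm] at h1
    rwa [← ENNReal.rpow_mul, one_div_mul_cancel hp0.ne', ENNReal.rpow_one,
      ENNReal.ofReal_rpow_of_pos (pow_pos (hεpos k) 2)] at h1
  -- Step 2: volume of exceptional sets
  have hvolEk : ∀ k, volume (Ek k) ≤ ENNReal.ofReal (8 * ε k ^ p) := by
    intro k
    have hεp : (0 : ℝ) < ε k ^ p := Real.rpow_pos_of_pos (hεpos k) p
    have h1 := hTP k
    rw [varThetaP, varM] at h1
    obtain ⟨δ, hδS⟩ := iInf_lt_iff.mp h1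
    have h2 := vol_le_sup a b hab (Ek k) Set.inter_subset_left δ.1 δ.2
    have h3 : (⨆ D : {D : List (ℝ × ℝ × ℝ) // IsPP a b D ∧ IsFine δ.1 D},
        ENNReal.ofReal (ppSum (Ek k) (fun u v _ => v - u) D.1)) ≤
        ENNReal.ofReal ((ε k ^ p)⁻¹) *
        ⨆ D : {D : List (ℝ × ℝ × ℝ) // IsPP a b D ∧ IsFine δ.1 D},
          ENNReal.ofReal (ppSum (Set.Icc a b)
            (fun u v t => ρ (g k t) ^ p * (v - u)) D.1) := by
      refine iSup_le fun D => ?_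
      have hstep : ppSum (Ek k) (fun u v _ => v - u) D.1 ≤
          (ε k ^ p)⁻¹ * ppSum (Set.Icc a b)
            (fun u v t => ρ (g k t) ^ p * (v - u)) D.1 := by
        rw [ppSum, ppSum, ← List.sum_map_mul_left]
        refine List.sum_le_sum fun q hq => ?_
        have hq' := D.2.1.1 q hq
        have hvu : (0 : ℝ) ≤ q.2.1 - q.1 := by linarith [hq'.2.1]
        by_cases hmem : q.2.2 ∈ Ek k
        · rw [Set.indicator_of_mem hmem, Set.indicator_of_mem hmem.1]
          rw [le_inv_mul_iff₀ hεp]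
          exact mul_le_mul_of_nonneg_right hmem.2 hvu
        · rw [Set.indicator_of_notMem hmem]
          have : (0 : ℝ) ≤ ρ (g k q.2.2) ^ p * (q.2.1 - q.1) :=
            mul_nonneg (Real.rpow_nonneg (apply_nonneg ρ _) p) hvu
          refine mul_nonneg (inv_nonneg.mpr hεp.le) ?_
          exact Set.indicator_nonneg (fun _ _ => this) _
      calc ENNReal.ofReal (ppSum (Ek k) (fun u v _ => v - u) D.1)
          ≤ ENNReal.ofReal ((ε k ^ p)⁻¹ * ppSum (Set.Icc a b)
              (fun u v t => ρ (g k t) ^ p * (v - u)) D.1) := ENNReal.ofReal_le_ofReal hstep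
        _ = ENNReal.ofReal ((ε k ^ p)⁻¹) * ENNReal.ofReal (ppSum (Set.Icc a b)
              (fun u v t => ρ (g k t) ^ p * (v - u)) D.1) :=
            ENNReal.ofReal_mul (inv_nonneg.mpr hεp.le)
        _ ≤ _ := mul_le_mul_right
            (le_iSup (fun D : {D : List (ℝ × ℝ × ℝ) // IsPP a b D ∧ IsFine δ.1 D} =>
              ENNReal.ofReal (ppSum (Set.Icc a b)
                (fun u v t => ρ (g k t) ^ p * (v - u)) D.1)) D) _
    have hkey : (ε k ^ p)⁻¹ * (ε k ^ 2) ^ p = ε k ^ p := by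
      have h2p : ((ε k : ℝ) ^ 2) ^ p = ε k ^ p * ε k ^ p := by
        rw [← Real.rpow_natCast (ε k) 2, ← Real.rpow_mul (hεpos k).le]
        push_cast
        rw [show (2 : ℝ) * p = p + p by ring, Real.rpow_add (hεpos k)]
      rw [h2p, inv_mul_cancel_left₀ hεp.ne']
    calc volume (Ek k)
        ≤ 8 * ⨆ D : {D : List (ℝ × ℝ × ℝ) // IsPP a b D ∧ IsFine δ.1 D},
            ENNReal.ofReal (ppSum (Ek k) (fun u v _ => v - u) D.1) := h2
      _ ≤ 8 * (ENNReal.ofReal ((ε k ^ p)⁻¹) * ENNReal.ofReal ((ε k ^ 2) ^ p)) := by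
          exact mul_le_mul_right (h3.trans (mul_le_mul_right hδS.le _)) _
      _ = ENNReal.ofReal (8 * ε k ^ p) := by
          rw [← ENNReal.ofReal_mul (inv_nonneg.mpr hεp.le), hkey,
            ENNReal.ofReal_mul (by norm_num : (0:ℝ) ≤ 8)]
          norm_num
  -- Step 3: summability
  have hsum8 : Summable (fun k => 8 * ε k ^ p) := by
    obtain ⟨K1, hK1⟩ := Filter.eventually_atTop.mp
      (hεsum.tendsto_atTop_zero.eventually_lt_const one_pos)
    have h1 : Summable (fun k => ε (k + K1) ^ p) := by
      refine Summable.of_nonneg_of_le (fun k => Real.rpow_nonneg (hεpos _).le p)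
        (fun k => ?_) ((summable_nat_add_iff K1).mpr hεsum)
      calc ε (k + K1) ^ p ≤ ε (k + K1) ^ (1 : ℝ) :=
            Real.rpow_le_rpow_of_exponent_ge (hεpos _) (hK1 (k + K1) (Nat.le_add_left _ _)).le hp
        _ = ε (k + K1) := Real.rpow_one _
    exact ((summable_nat_add_iff (f := fun k => ε k ^ p) K1).mp h1).mul_left 8
  have htsum : ∑' k, volume (Ek k) ≠ ⊤ := by
    refine ne_top_of_le_ne_top ?_ (ENNReal.tsum_le_tsum hvolEk)
    rw [← ENNReal.ofReal_tsum_of_nonneg (fun k => by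
      have := Real.rpow_nonneg (hεpos k).le p; positivity) hsum8]
    exact ENNReal.ofReal_ne_top
  -- Step 4: Borel–Cantelli
  refine ⟨limsup Ek atTop, measure_limsup_atTop_eq_zero htsum, ?_⟩
  intro x hx η hη
  obtain ⟨hxI, hxE⟩ := hx
  have hev : ∀ᶠ k in atTop, x ∉ Ek k := by
    rw [Filter.mem_limsup_iff_frequently_mem] at hxE
    exact Filter.not_frequently.mp hxE
  obtain ⟨K, hK⟩ := Filter.eventually_atTop.mp hev
  have hbound : ∀ k ≥ K, ρ (g k x) ≤ ε k := by
    intro k hk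
    by_contra hρ
    push_neg at hρ
    exact hK k hk ⟨hxI, Real.rpow_le_rpow (hεpos k).le hρ.le hp0.le⟩
  have hcs : CauchySeq (fun n => ∑ k ∈ Finset.range n, ε k) :=
    hεsum.hasSum.tendsto_sum_nat.cauchySeq
  obtain ⟨N0, hN0⟩ := Metric.cauchySeq_iff.mp hcs η hη
  refine ⟨max N0 K, ?_⟩
  have key : ∀ m n, max N0 K ≤ m → max N0 K ≤ n → n ≤ m → ρ (f m x - f n x) < η := by
    intro m n hm hn hnm
    have h1 : f m x - f n x = ∑ k ∈ Finset.Ico n m, (f (k + 1) x - f k x) :=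
      telescope_sub (fun k => f k x) hnm
    calc ρ (f m x - f n x) ≤ ∑ k ∈ Finset.Ico n m, ρ (f (k + 1) x - f k x) := by
          rw [h1]; exact seminorm_sum_le' ρ _ _
      _ ≤ ∑ k ∈ Finset.Ico n m, ε k := by
          refine Finset.sum_le_sum fun k hk => ?_
          have hkK : K ≤ k := le_trans (le_trans (le_max_right N0 K) hn)
            (Finset.mem_Ico.mp hk).1
          exact hbound k hkK
      _ = (∑ k ∈ Finset.range m, ε k) - ∑ k ∈ Finset.range n, ε k :=
          Finset.sum_Ico_eq_sub ε hnm
      _ ≤ dist (∑ k ∈ Finset.range m, ε k) (∑ k ∈ Finset.range n, ε k) := by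
          rw [Real.dist_eq]; exact le_abs_self _
      _ < η := hN0 m (le_trans (le_max_left N0 K) hm) n (le_trans (le_max_left N0 K) hn)
  intro m hm n hn
  rcases le_total n m with hnm | hnm
  · exact key m n hm hn hnm
  · have : ρ (f m x - f n x) = ρ (f n x - f m x) := by
      rw [← neg_sub, map_neg_eq_map]
    rw [this]
    exact key n m hn hm hnm
end
end

section
/- (Completeness of the space of upper integrable functions.) Let (X,ρ) be a sequentially complete semi-normed space and 1 ≤ p < ∞. Then U^p_ρ([a,b];X) is sequentially complete with respect to the seminorm ‖·‖_{U^p_ρ}: every Cauchy sequence {f_n} in U^p_ρ([a,b];X) converges in the seminorm ‖·‖_{U^p_ρ} to some f ∈ U^p_ρ([a,b];X). -/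
open scoped ENNReal
open Filter MeasureTheory

noncomputable section

variable {X : Type*}

namespace Stmt18Aux

open ENNReal
open scoped Classical

/-- A gauge. -/
abbrev Gauge := {δ : ℝ → ℝ // ∀ x, 0 < δ x}

instance : Nonempty Gauge := ⟨⟨fun _ => 1, fun _ => one_pos⟩⟩

/-- The weight `c(t)·(v-u)`. -/
def wt (c : ℝ → ℝ) : ℝ → ℝ → ℝ → ℝ := fun u v t => c t * (v - u)

/-- The variational measure of `c(t)(v-u)` on `E`. -/
def V (a b : ℝ) (c : ℝ → ℝ) (E : Set ℝ) : ℝ≥0∞ := varM a b (wt c) E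

/-- `ℝ≥0∞`-valued version of `ppSum` for the weight `wt c`. -/
noncomputable def epp (E : Set ℝ) (c : ℝ → ℝ) (D : List (ℝ × ℝ × ℝ)) : ℝ≥0∞ :=
  (D.map (fun q => if q.2.2 ∈ E then ENNReal.ofReal (c q.2.2 * (q.2.1 - q.1)) else 0)).sum

lemma ppSum_nil (E : Set ℝ) (w : ℝ → ℝ → ℝ → ℝ) : ppSum E w [] = 0 := rfl

lemma ppSum_cons (E : Set ℝ) (w : ℝ → ℝ → ℝ → ℝ) (q : ℝ × ℝ × ℝ) (D : List (ℝ × ℝ × ℝ)) :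
    ppSum E w (q :: D) = E.indicator (fun _ => w q.1 q.2.1 q.2.2) q.2.2 + ppSum E w D := by
  simp [ppSum]

lemma ppSum_wt_nonneg {E : Set ℝ} {c : ℝ → ℝ} {D : List (ℝ × ℝ × ℝ)}
    (hc : ∀ t, 0 ≤ c t) (hD : ∀ q ∈ D, q.1 ≤ q.2.1) : 0 ≤ ppSum E (wt c) D := by
  induction D with
  | nil => simp [ppSum]
  | cons q D ih =>
    rw [ppSum_cons]
    have h1 : (0:ℝ) ≤ E.indicator (fun _ => wt c q.1 q.2.1 q.2.2) q.2.2 := by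
      apply Set.indicator_nonneg
      intro _ _
      exact mul_nonneg (hc _) (by linarith [hD q (by simp)])
    have h2 := ih (fun q' hq' => hD q' (by simp [hq']))
    linarith

lemma ofReal_ppSum_le_epp {E : Set ℝ} {c : ℝ → ℝ} {D : List (ℝ × ℝ × ℝ)} :
    ENNReal.ofReal (ppSum E (wt c) D) ≤ epp E c D := by
  induction D with
  | nil => simp [ppSum, epp]
  | cons q D ih =>
    rw [ppSum_cons]
    refine le_trans ENNReal.ofReal_add_le ?_
    have : epp E c (q :: D)
        = (if q.2.2 ∈ E then ENNReal.ofReal (c q.2.2 * (q.2.1 - q.1)) else 0) + epp E c D := by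
      simp [epp]
    rw [this]
    refine add_le_add ?_ ih
    rw [Set.indicator_apply]
    split_ifs <;> simp [wt]

lemma epp_eq_ofReal {E : Set ℝ} {c : ℝ → ℝ} {D : List (ℝ × ℝ × ℝ)}
    (hc : ∀ t, 0 ≤ c t) (hD : ∀ q ∈ D, q.1 ≤ q.2.1) :
    epp E c D = ENNReal.ofReal (ppSum E (wt c) D) := by
  induction D with
  | nil => simp [ppSum, epp]
  | cons q D ih =>
    rw [ppSum_cons]
    have hq : q.1 ≤ q.2.1 := hD q (by simp)
    have hind : (0:ℝ) ≤ E.indicator (fun _ => wt c q.1 q.2.1 q.2.2) q.2.2 :=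
      Set.indicator_nonneg (fun _ _ => mul_nonneg (hc _) (by linarith)) _
    have htail : 0 ≤ ppSum E (wt c) D :=
      ppSum_wt_nonneg hc (fun q' hq' => hD q' (by simp [hq']))
    rw [ENNReal.ofReal_add hind htail]
    have : epp E c (q :: D)
        = (if q.2.2 ∈ E then ENNReal.ofReal (c q.2.2 * (q.2.1 - q.1)) else 0) + epp E c D := by
      simp [epp]
    rw [this, ih (fun q' hq' => hD q' (by simp [hq']))]
    congr 1
    rw [Set.indicator_apply]
    split_ifs <;> simp [wt]

lemma V_eq (a b : ℝ) {c : ℝ → ℝ} (hc : ∀ t, 0 ≤ c t) (E : Set ℝ) :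
    V a b c E = ⨅ δ : Gauge, ⨆ D : {D : List (ℝ × ℝ × ℝ) // IsPP a b D ∧ IsFine δ.1 D},
      epp E c D.1 := by
  unfold V varM
  refine iInf_congr fun δ => iSup_congr fun D => ?_
  rw [epp_eq_ofReal hc (fun q hq => (D.2.1.1 q hq).2.1.le)]

lemma epp_mono {E E' : Set ℝ} {c c' : ℝ → ℝ} {D : List (ℝ × ℝ × ℝ)}
    (hEE' : E ⊆ E') (hcc' : ∀ t ∈ E, c t ≤ c' t) (hc' : ∀ t, 0 ≤ c' t)
    (hD : ∀ q ∈ D, q.1 ≤ q.2.1) :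
    epp E c D ≤ epp E' c' D := by
  unfold epp
  apply List.sum_le_sum
  intro q hq
  by_cases h : q.2.2 ∈ E
  · rw [if_pos h, if_pos (hEE' h)]
    exact ENNReal.ofReal_le_ofReal
      (mul_le_mul_of_nonneg_right (hcc' _ h) (by linarith [hD q hq]))
  · rw [if_neg h]
    exact zero_le

lemma V_mono (a b : ℝ) {E E' : Set ℝ} {c c' : ℝ → ℝ}
    (hc' : ∀ t, 0 ≤ c' t) (hcc' : ∀ t ∈ E, c t ≤ c' t) (hEE' : E ⊆ E') :
    V a b c E ≤ V a b c' E' := by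
  unfold V varM
  refine iInf_mono fun δ => iSup_mono fun D => ?_
  have hD : ∀ q ∈ D.1, q.1 ≤ q.2.1 := fun q hq => (D.2.1.1 q hq).2.1.le
  calc ENNReal.ofReal (ppSum E (wt c) D.1) ≤ epp E c D.1 := ofReal_ppSum_le_epp
    _ ≤ epp E' c' D.1 := epp_mono hEE' hcc' hc' hD
    _ = ENNReal.ofReal (ppSum E' (wt c') D.1) := epp_eq_ofReal hc' hD

lemma epp_smul {E : Set ℝ} {c : ℝ → ℝ} {r : ℝ} (hr : 0 ≤ r) (D : List (ℝ × ℝ × ℝ)) :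
    epp E (fun t => r * c t) D = ENNReal.ofReal r * epp E c D := by
  induction D with
  | nil => simp [epp]
  | cons q D ih =>
    have h1 : epp E (fun t => r * c t) (q :: D)
        = (if q.2.2 ∈ E then ENNReal.ofReal (r * c q.2.2 * (q.2.1 - q.1)) else 0)
          + epp E (fun t => r * c t) D := by simp [epp]
    have h2 : epp E c (q :: D)
        = (if q.2.2 ∈ E then ENNReal.ofReal (c q.2.2 * (q.2.1 - q.1)) else 0) + epp E c D := by
      simp [epp]
    rw [h1, h2, ih, mul_add]
    congr 1
    split_ifs
    · rw [mul_assoc, ENNReal.ofReal_mul hr]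
    · simp

lemma V_smul (a b : ℝ) {E : Set ℝ} {c : ℝ → ℝ} {r : ℝ} (hr : 0 ≤ r) (hc : ∀ t, 0 ≤ c t) :
    V a b (fun t => r * c t) E ≤ ENNReal.ofReal r * V a b c E := by
  rw [V_eq a b (fun t => mul_nonneg hr (hc t)) E, V_eq a b hc E,
    ENNReal.mul_iInf (fun h => absurd h ENNReal.ofReal_ne_top)]
  refine iInf_mono fun δ => ?_
  rw [ENNReal.mul_iSup]
  exact iSup_mono fun D => le_of_eq (epp_smul hr D.1)

end Stmt18Aux
namespace Stmt18Aux

open scoped Classical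

lemma isPP_filter {a b : ℝ} {D : List (ℝ × ℝ × ℝ)} (h : IsPP a b D)
    (pred : ℝ × ℝ × ℝ → Bool) : IsPP a b (D.filter pred) :=
  ⟨fun q hq => h.1 q (List.mem_of_mem_filter hq), h.2.sublist List.filter_sublist⟩

lemma epp_filter_eq {E : Set ℝ} {c : ℝ → ℝ} {D : List (ℝ × ℝ × ℝ)}
    {pred : ℝ × ℝ × ℝ → Bool} (h : ∀ q ∈ D, pred q = false → q.2.2 ∉ E) :
    epp E c (D.filter pred) = epp E c D := by
  induction D with
  | nil => simp
  | cons q D ih =>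
    have ih' := ih (fun q' hq' => h q' (by simp [hq']))
    by_cases hq : pred q = true
    · rw [List.filter_cons_of_pos hq]
      simp only [epp, List.map_cons, List.sum_cons] at ih' ⊢
      rw [ih']
    · rw [List.filter_cons_of_neg (by simpa using hq)]
      have : q.2.2 ∉ E := h q (by simp) (by simpa using hq)
      simp only [epp, List.map_cons, List.sum_cons, if_neg this, zero_add]
      exact ih'

lemma epp_eq_tsum_parts (S : Set ℝ) (part : ℝ → ℕ) (c : ℝ → ℝ) (D : List (ℝ × ℝ × ℝ)) :
    epp S c D = ∑' k, epp (S ∩ {t | part t = k}) c D := by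
  induction D with
  | nil => simp [epp]
  | cons q D ih =>
    have h1 : ∀ T : Set ℝ, epp T c (q :: D)
        = (if q.2.2 ∈ T then ENNReal.ofReal (c q.2.2 * (q.2.1 - q.1)) else 0) + epp T c D := by
      intro T; simp [epp]
    have hterm : (if q.2.2 ∈ S then ENNReal.ofReal (c q.2.2 * (q.2.1 - q.1)) else 0)
        = ∑' k, (if q.2.2 ∈ S ∩ {t | part t = k}
            then ENNReal.ofReal (c q.2.2 * (q.2.1 - q.1)) else 0) := by
      by_cases hq : q.2.2 ∈ S
      · rw [if_pos hq, tsum_eq_single (part q.2.2) ?_]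
        · rw [if_pos ⟨hq, rfl⟩]
        · intro k hk
          exact if_neg fun hmem => hk hmem.2.symm
      · rw [if_neg hq]
        symm
        convert tsum_zero with k
        exact if_neg fun hmem => hq hmem.1
    rw [h1 S, ih, hterm, ← ENNReal.tsum_add]
    refine tsum_congr fun k => ?_
    rw [h1 (S ∩ {t | part t = k})]
    congr 1
    split_ifs <;> rfl

lemma foldr_min_pos {l : List ℝ} (h : ∀ x ∈ l, 0 < x) : 0 < l.foldr min 1 := by
  induction l with
  | nil => simp
  | cons x l ih =>
    simp only [List.foldr_cons, lt_min_iff]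
    exact ⟨h x (by simp), ih (fun y hy => h y (by simp [hy]))⟩

lemma foldr_min_le {l : List ℝ} {x : ℝ} (h : x ∈ l) : l.foldr min 1 ≤ x := by
  induction l with
  | nil => simp at h
  | cons y l ih =>
    simp only [List.foldr_cons]
    rcases List.mem_cons.1 h with rfl | h'
    · exact min_le_left _ _
    · exact le_trans (min_le_right _ _) (ih h')

lemma le_foldr_max {l : List ℕ} {x : ℕ} (h : x ∈ l) : x ≤ l.foldr max 0 := by
  induction l with
  | nil => simp at h
  | cons y l ih =>
    simp only [List.foldr_cons]
    rcases List.mem_cons.1 h with rfl | h'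
    · exact le_max_left _ _
    · exact le_trans (ih h') (le_max_right _ _)

lemma list_sum_eq_fin {α M : Type*} [AddCommMonoid M] (l : List α) (f : α → M) :
    (l.map f).sum = ∑ i : Fin l.length, f (l.get i) := by
  induction l with
  | nil => simp
  | cons x l ih =>
    simp only [List.map_cons, List.sum_cons, List.length_cons, Fin.sum_univ_succ, ih]
    rfl

/-- Total length of a partial partition is at most `b - a`. -/
lemma length_sum_le {a b : ℝ} {D : List (ℝ × ℝ × ℝ)} (hD : IsPP a b D) :
    (D.map (fun q => ENNReal.ofReal (q.2.1 - q.1))).sum ≤ ENNReal.ofReal (b - a) := by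
  classical
  have hnodup : D.Nodup := by
    refine List.Pairwise.imp_of_mem ?_ hD.2
    intro q q' hq hq' hR
    rcases hD.1 q hq with ⟨_, hlt, _⟩
    rcases hD.1 q' hq' with ⟨_, hlt', _⟩
    rintro rfl
    rcases hR with h | h <;> linarith
  have hforall := (letI : Std.Symm (fun q q' : ℝ × ℝ × ℝ => q.2.1 ≤ q'.1 ∨ q'.2.1 ≤ q.1) :=
    ⟨fun q q' h => h.symm⟩; List.Pairwise.forall hD.2)
  have hdisj : (↑D.toFinset : Set (ℝ × ℝ × ℝ)).PairwiseDisjoint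
      (fun q => Set.Ioo q.1 q.2.1) := by
    intro q hq q' hq' hne
    have hq2 : q ∈ D := by simpa using hq
    have hq2' : q' ∈ D := by simpa using hq'
    rcases hforall hq2 hq2' hne with h | h
    · refine Set.disjoint_left.2 fun x hx hx' => ?_
      rcases hx with ⟨_, h2⟩; rcases hx' with ⟨h3, _⟩; linarith
    · refine Set.disjoint_left.2 fun x hx hx' => ?_
      rcases hx with ⟨h2, _⟩; rcases hx' with ⟨_, h3⟩; linarith
  have hmeas := MeasureTheory.measure_biUnion_finset (μ := MeasureTheory.volume) hdisj
    (fun q _ => measurableSet_Ioo)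
  have hsum : (D.map (fun q => ENNReal.ofReal (q.2.1 - q.1))).sum
      = ∑ q ∈ D.toFinset, MeasureTheory.volume (Set.Ioo q.1 q.2.1) := by
    rw [← List.sum_toFinset _ hnodup]
    refine Finset.sum_congr rfl fun q _ => ?_
    rw [Real.volume_Ioo]
  rw [hsum, ← hmeas]
  have hsub : (⋃ q ∈ D.toFinset, Set.Ioo q.1 q.2.1) ⊆ Set.Ioo a b := by
    intro x hx
    simp only [Set.mem_iUnion] at hx
    rcases hx with ⟨q, hq, hx1, hx2⟩
    rw [List.mem_toFinset] at hq
    rcases hD.1 q hq with ⟨h1, _, h3, _⟩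
    exact ⟨by linarith, by linarith⟩
  calc MeasureTheory.volume (⋃ q ∈ D.toFinset, Set.Ioo q.1 q.2.1)
      ≤ MeasureTheory.volume (Set.Ioo a b) := MeasureTheory.measure_mono hsub
    _ = ENNReal.ofReal (b - a) := Real.volume_Ioo

/-- ε-removal helper. -/
lemma le_of_forall_eps_mul {x y C : ℝ≥0∞} (hC : C ≠ ⊤)
    (h : ∀ ε : ℝ, 0 < ε → x ≤ y + ENNReal.ofReal ε * C) : x ≤ y := by
  refine ENNReal.le_of_forall_pos_le_add fun ε hε _ => ?_
  have hT : (0:ℝ) < C.toReal + 1 := by positivity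
  have hε0 : (0:ℝ) < (ε : ℝ) := hε
  have hε' : (0:ℝ) < (ε : ℝ) / (C.toReal + 1) := by positivity
  refine (h _ hε').trans (add_le_add_right ?_ y)
  have hCle : C ≤ ENNReal.ofReal (C.toReal + 1) := by
    conv_lhs => rw [← ENNReal.ofReal_toReal hC]
    exact ENNReal.ofReal_le_ofReal (by linarith)
  calc ENNReal.ofReal ((ε : ℝ) / (C.toReal + 1)) * C
      ≤ ENNReal.ofReal ((ε : ℝ) / (C.toReal + 1)) * ENNReal.ofReal (C.toReal + 1) :=
        mul_le_mul_right hCle _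
    _ = ENNReal.ofReal ((ε : ℝ) / (C.toReal + 1) * (C.toReal + 1)) :=
        (ENNReal.ofReal_mul hε'.le).symm
    _ = ENNReal.ofReal (ε : ℝ) := by rw [div_mul_cancel₀ _ hT.ne']
    _ = (ε : ℝ≥0∞) := ENNReal.ofReal_coe_nnreal

/-- Geometric series helper. -/
lemma tsum_ofReal_geom : (∑' j : ℕ, ENNReal.ofReal ((2:ℝ)⁻¹ ^ j)) = 2 := by
  have hsum : Summable (fun j : ℕ => (2:ℝ)⁻¹ ^ j) :=
    summable_geometric_of_lt_one (by norm_num) (by norm_num)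
  rw [← ENNReal.ofReal_tsum_of_nonneg (fun j => by positivity) hsum]
  have : (∑' j : ℕ, (2:ℝ)⁻¹ ^ j) = 2 := by
    rw [tsum_geometric_of_lt_one (by norm_num) (by norm_num)]
    norm_num
  rw [this]
  norm_num

/-- Minkowski for finitely many summands, `ℝ≥0∞` version. -/
lemma EMink {ι : Type*} {P : ℝ} (hp : 1 ≤ P) (s : Finset ι) :
    ∀ (m : ℕ) (F : ℕ → ι → ℝ≥0∞),
      (∑ i ∈ s, (∑ j ∈ Finset.range m, F j i) ^ P) ^ (1/P)
        ≤ ∑ j ∈ Finset.range m, (∑ i ∈ s, (F j i) ^ P) ^ (1/P) := by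
  have hP : 0 < P := lt_of_lt_of_le zero_lt_one hp
  intro m
  induction m with
  | zero =>
    intro F
    have h0 : (∑ i ∈ s, (∑ j ∈ Finset.range 0, F j i) ^ P) = 0 := by
      refine Finset.sum_eq_zero fun i _ => ?_
      rw [Finset.range_zero, Finset.sum_empty, ENNReal.zero_rpow_of_pos hP]
    rw [h0, ENNReal.zero_rpow_of_pos (one_div_pos.mpr hP), Finset.range_zero, Finset.sum_empty]
  | succ m ih =>
    intro F
    have h1 : ∀ i, (∑ j ∈ Finset.range (m+1), F j i)
        = (∑ j ∈ Finset.range m, F j i) + F m i := fun i => Finset.sum_range_succ _ _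
    simp only [h1]
    refine le_trans (ENNReal.Lp_add_le s _ _ hp) ?_
    rw [Finset.sum_range_succ]
    exact add_le_add_left (ih _) _

end Stmt18Aux
namespace Stmt18Aux

open scoped Classical

lemma exists_gauge_of_V_lt {a b : ℝ} {c : ℝ → ℝ} {E : Set ℝ} {B : ℝ≥0∞}
    (hc : ∀ t, 0 ≤ c t) (h : V a b c E < B) :
    ∃ δ : Gauge, ∀ D : List (ℝ × ℝ × ℝ), IsPP a b D → IsFine δ.1 D → epp E c D ≤ B := by
  rw [V_eq a b hc E] at h
  obtain ⟨δ, hδ⟩ := iInf_lt_iff.mp h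
  exact ⟨δ, fun D h1 h2 =>
    le_trans (le_iSup (fun D' : {D' : List (ℝ × ℝ × ℝ) // IsPP a b D' ∧ IsFine δ.1 D'} =>
      epp E c D'.1) ⟨D, h1, h2⟩) hδ.le⟩

lemma V_le_gauge (a b : ℝ) {c : ℝ → ℝ} (hc : ∀ t, 0 ≤ c t) (E : Set ℝ) (δ : Gauge) :
    V a b c E ≤ ⨆ D : {D : List (ℝ × ℝ × ℝ) // IsPP a b D ∧ IsFine δ.1 D}, epp E c D.1 := by
  rw [V_eq a b hc E]
  exact iInf_le _ δ

lemma V_iUnion_le (a b : ℝ) {c : ℝ → ℝ} (hc : ∀ t, 0 ≤ c t) (E : ℕ → Set ℝ) :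
    V a b c (⋃ k, E k) ≤ ∑' k, V a b c (E k) := by
  by_cases htop : ∃ k, V a b c (E k) = ⊤
  · obtain ⟨k, hk⟩ := htop
    calc V a b c (⋃ k, E k) ≤ ⊤ := le_top
      _ = V a b c (E k) := hk.symm
      _ ≤ ∑' k, V a b c (E k) := ENNReal.le_tsum k
  push_neg at htop
  refine le_of_forall_eps_mul (C := 2) (by norm_num) fun ε hε => ?_
  have hch : ∀ k : ℕ, ∃ δ : Gauge, ∀ D, IsPP a b D → IsFine δ.1 D →
      epp (E k) c D ≤ V a b c (E k) + ENNReal.ofReal (ε * 2⁻¹ ^ k) := by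
    intro k
    refine exists_gauge_of_V_lt hc ?_
    exact ENNReal.lt_add_right (htop k)
      (ENNReal.ofReal_pos.mpr (by positivity)).ne'
  choose δs hδs using hch
  have hKex : ∀ t, t ∈ (⋃ k, E k) → ∃ k, t ∈ E k := fun t ht => Set.mem_iUnion.mp ht
  set Kf : ℝ → ℕ := fun t => if h : ∃ k, t ∈ E k then Nat.find h else 0 with hKf
  have hKf1 : ∀ t, t ∈ (⋃ k, E k) → t ∈ E (Kf t) := by
    intro t ht
    obtain ⟨k, hk⟩ := hKex t ht
    have h : ∃ k, t ∈ E k := ⟨k, hk⟩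
    simp only [hKf, dif_pos h]
    exact Nat.find_spec h
  set δ : Gauge := ⟨fun t => (δs (Kf t)).1 t, fun t => (δs (Kf t)).2 t⟩ with hδdef
  refine le_trans (V_le_gauge a b hc _ δ) (iSup_le fun DD => ?_)
  obtain ⟨D, hPP, hFine⟩ := DD
  have hD : ∀ q ∈ D, q.1 ≤ q.2.1 := fun q hq => (hPP.1 q hq).2.1.le
  calc epp (⋃ k, E k) c D = ∑' k, epp ((⋃ k', E k') ∩ {t | Kf t = k}) c D :=
        epp_eq_tsum_parts _ Kf c D
    _ ≤ ∑' k, (V a b c (E k) + ENNReal.ofReal (ε * 2⁻¹ ^ k)) := by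
        refine ENNReal.tsum_le_tsum fun k => ?_
        set pred : ℝ × ℝ × ℝ → Bool :=
          fun q => decide (q.2.2 ∈ (⋃ k', E k') ∩ {t | Kf t = k}) with hpred
        have hstep1 : epp ((⋃ k', E k') ∩ {t | Kf t = k}) c (D.filter pred)
            = epp ((⋃ k', E k') ∩ {t | Kf t = k}) c D := by
          refine epp_filter_eq fun q hq hfalse => ?_
          simpa [hpred] using hfalse
        have hsub : ((⋃ k', E k') ∩ {t | Kf t = k}) ⊆ E k := by
          rintro t ⟨ht1, ht2⟩
          have h2 := hKf1 t ht1
          have h3 : Kf t = k := ht2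
          rwa [h3] at h2
        have hfine' : IsFine (δs k).1 (D.filter pred) := by
          intro q hq
          have hqD : q ∈ D := List.mem_of_mem_filter hq
          have hmem : q.2.2 ∈ (⋃ k', E k') ∩ {t | Kf t = k} := by
            have h4 := List.of_mem_filter hq
            simpa [hpred] using h4
          have h5 : Kf q.2.2 = k := hmem.2
          have h6 := hFine q hqD
          rw [← h5]
          exact h6
        calc epp ((⋃ k', E k') ∩ {t | Kf t = k}) c D
            = epp ((⋃ k', E k') ∩ {t | Kf t = k}) c (D.filter pred) := hstep1.symm
          _ ≤ epp (E k) c (D.filter pred) :=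
              epp_mono hsub (fun t _ => le_refl _) hc
                (fun q hq => hD q (List.mem_of_mem_filter hq))
          _ ≤ V a b c (E k) + ENNReal.ofReal (ε * 2⁻¹ ^ k) :=
              hδs k _ (isPP_filter hPP pred) hfine'
    _ = (∑' k, V a b c (E k)) + ∑' k, ENNReal.ofReal (ε * 2⁻¹ ^ k) := ENNReal.tsum_add
    _ ≤ (∑' k, V a b c (E k)) + ENNReal.ofReal ε * 2 := by
        refine add_le_add_right (le_of_eq ?_) _
        calc (∑' k : ℕ, ENNReal.ofReal (ε * 2⁻¹ ^ k))
            = ∑' k : ℕ, ENNReal.ofReal ε * ENNReal.ofReal ((2:ℝ)⁻¹ ^ k) :=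
              tsum_congr fun k => ENNReal.ofReal_mul hε.le
          _ = ENNReal.ofReal ε * ∑' k : ℕ, ENNReal.ofReal ((2:ℝ)⁻¹ ^ k) := ENNReal.tsum_mul_left
          _ = ENNReal.ofReal ε * 2 := by rw [tsum_ofReal_geom]

end Stmt18Aux
namespace Stmt18Aux

open scoped Classical

lemma rpow_rpow_inv {x : ℝ≥0∞} {P : ℝ} (hP : 0 < P) : (x ^ (1/P)) ^ P = x := by
  rw [← ENNReal.rpow_mul, one_div, inv_mul_cancel₀ hP.ne', ENNReal.rpow_one]

lemma rpow_inv_rpow {x : ℝ≥0∞} {P : ℝ} (hP : 0 < P) : (x ^ P) ^ (1/P) = x := by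
  rw [← ENNReal.rpow_mul, one_div, mul_inv_cancel₀ hP.ne', ENNReal.rpow_one]

lemma isFine_mono {δ1 δ2 : ℝ → ℝ} {D : List (ℝ × ℝ × ℝ)} (h : IsFine δ1 D)
    (hle : ∀ q ∈ D, δ1 q.2.2 ≤ δ2 q.2.2) : IsFine δ2 D := by
  intro q hq
  obtain ⟨h1, h2⟩ := h q hq
  have := hle q hq
  exact ⟨by linarith, by linarith⟩

lemma epp_rpow_eq_sum {E : Set ℝ} {c : ℝ → ℝ} {P : ℝ} (hP : 0 < P)
    (hc : ∀ t, 0 ≤ c t) {D : List (ℝ × ℝ × ℝ)} :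
    epp E (fun t => c t ^ P) D
      = ∑ i : Fin D.length,
          ((if (D.get i).2.2 ∈ E then ENNReal.ofReal (c (D.get i).2.2) else 0)
            * ENNReal.ofReal ((D.get i).2.1 - (D.get i).1) ^ (1/P)) ^ P := by
  unfold epp
  rw [list_sum_eq_fin]
  refine Finset.sum_congr rfl fun i _ => ?_
  by_cases h : (D.get i).2.2 ∈ E
  · rw [if_pos h, if_pos h]
    rw [ENNReal.mul_rpow_of_nonneg _ _ hP.le, rpow_rpow_inv hP,
      ENNReal.ofReal_rpow_of_nonneg (hc _) hP.le, ← ENNReal.ofReal_mul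
        (Real.rpow_nonneg (hc _) P)]
  · rw [if_neg h, if_neg h, zero_mul, ENNReal.zero_rpow_of_pos hP]

/-- Countable Minkowski-type inequality for `V`. -/
lemma V_rpow_le_tsum (a b : ℝ) {P : ℝ} (hp : 1 ≤ P) {E : Set ℝ} {c : ℝ → ℝ} {cs : ℕ → ℝ → ℝ}
    (hc : ∀ t, 0 ≤ c t) (hcs : ∀ j t, 0 ≤ cs j t)
    (happrox : ∀ t ∈ E, ∀ ε : ℝ, 0 < ε → ∃ J, c t ≤ (∑ j ∈ Finset.range J, cs j t) + ε) :
    (V a b (fun t => c t ^ P) E) ^ (1/P)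
      ≤ ∑' j, (V a b (fun t => cs j t ^ P) E) ^ (1/P) := by
  have hP : 0 < P := lt_of_lt_of_le zero_lt_one hp
  have hP' : 0 < 1/P := by positivity
  set Vj : ℕ → ℝ≥0∞ := fun j => V a b (fun t => cs j t ^ P) E with hVj
  set S : ℝ≥0∞ := ∑' j, Vj j ^ (1/P) with hS
  by_cases htop : ∃ j, Vj j = ⊤
  · obtain ⟨j, hj⟩ := htop
    have h1 : Vj j ^ (1/P) = ⊤ := by rw [hj]; exact ENNReal.top_rpow_of_pos hP'
    calc (V a b (fun t => c t ^ P) E) ^ (1/P) ≤ ⊤ := le_top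
      _ = Vj j ^ (1/P) := h1.symm
      _ ≤ S := ENNReal.le_tsum j
  push_neg at htop
  set CC : ℝ≥0∞ := 2 + ENNReal.ofReal (b - a) ^ (1/P) with hCC
  have hCCne : CC ≠ ⊤ := by
    rw [hCC]
    exact ENNReal.add_ne_top.mpr ⟨ENNReal.ofNat_ne_top,
      ENNReal.rpow_ne_top_of_nonneg hP'.le ENNReal.ofReal_ne_top⟩
  refine le_of_forall_eps_mul hCCne fun ε hε => ?_
  have hch : ∀ j : ℕ, ∃ δ : Gauge, ∀ D, IsPP a b D → IsFine δ.1 D →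
      epp E (fun t => cs j t ^ P) D ≤ (Vj j ^ (1/P) + ENNReal.ofReal (ε * 2⁻¹ ^ j)) ^ P := by
    intro j
    refine exists_gauge_of_V_lt (fun t => Real.rpow_nonneg (hcs j t) P) ?_
    have h2 : Vj j ^ (1/P) < Vj j ^ (1/P) + ENNReal.ofReal (ε * 2⁻¹ ^ j) :=
      ENNReal.lt_add_right (ENNReal.rpow_ne_top_of_nonneg hP'.le (htop j))
        (ENNReal.ofReal_pos.mpr (by positivity)).ne'
    calc V a b (fun t => cs j t ^ P) E = (Vj j ^ (1/P)) ^ P := (rpow_rpow_inv hP).symm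
      _ < (Vj j ^ (1/P) + ENNReal.ofReal (ε * 2⁻¹ ^ j)) ^ P := ENNReal.rpow_lt_rpow h2 hP
  choose δs hδs using hch
  have hJex : ∀ t : ℝ, t ∈ E → ∃ J, c t ≤ (∑ j ∈ Finset.range J, cs j t) + ε :=
    fun t ht => happrox t ht ε hε
  set Jf : ℝ → ℕ := fun t => if h : t ∈ E then (hJex t h).choose else 0 with hJf
  have hJf1 : ∀ t, t ∈ E → c t ≤ (∑ j ∈ Finset.range (Jf t), cs j t) + ε := by
    intro t ht
    simp only [hJf, dif_pos ht]
    exact (hJex t ht).choose_spec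
  set δ : Gauge := ⟨fun t => ((List.range (Jf t)).map (fun j => (δs j).1 t)).foldr min 1,
    fun t => foldr_min_pos (by
      intro x hx
      simp only [List.mem_map, List.mem_range] at hx
      obtain ⟨j, _, rfl⟩ := hx
      exact (δs j).2 t)⟩ with hδdef
  have hδle : ∀ t, ∀ j < Jf t, δ.1 t ≤ (δs j).1 t := fun t j hj =>
    foldr_min_le (List.mem_map_of_mem (List.mem_range.mpr hj))
  have hmain : V a b (fun t => c t ^ P) E ≤ (S + ENNReal.ofReal ε * CC) ^ P := by
    refine le_trans (V_le_gauge a b (fun t => Real.rpow_nonneg (hc t) P) E δ)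
      (iSup_le fun DD => ?_)
    obtain ⟨D, hPP, hFine⟩ := DD
    have hD : ∀ q ∈ D, q.1 ≤ q.2.1 := fun q hq => (hPP.1 q hq).2.1.le
    have key : (epp E (fun t => c t ^ P) D) ^ (1/P) ≤ S + ENNReal.ofReal ε * CC := by
      set JM : ℕ := (D.map (fun q => Jf q.2.2)).foldr max 0 with hJM
      have hJMle : ∀ q ∈ D, Jf q.2.2 ≤ JM := fun q hq =>
        le_foldr_max (List.mem_map_of_mem hq)
      set L : Fin D.length → ℝ≥0∞ :=
        fun i => ENNReal.ofReal ((D.get i).2.1 - (D.get i).1) with hLdef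
      set A : Fin D.length → ℝ≥0∞ :=
        fun i => (if (D.get i).2.2 ∈ E then ENNReal.ofReal (c (D.get i).2.2) else 0)
          * L i ^ (1/P) with hAdef
      set B : ℕ → Fin D.length → ℝ≥0∞ := fun j i =>
        if (D.get i).2.2 ∈ E ∧ j < Jf (D.get i).2.2
          then ENNReal.ofReal (cs j (D.get i).2.2) else 0 with hBdef
      set Eps : Fin D.length → ℝ≥0∞ :=
        fun i => if (D.get i).2.2 ∈ E then ENNReal.ofReal ε else 0 with hEdef
      set F : ℕ → Fin D.length → ℝ≥0∞ :=
        fun j i => (if j < JM then B j i else Eps i) * L i ^ (1/P) with hFdef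
      have hFlt : ∀ i, ∀ j ∈ Finset.range JM, F j i = B j i * L i ^ (1/P) := by
        intro i j hj
        simp only [hFdef]
        rw [if_pos (Finset.mem_range.mp hj)]
      have hFtop : ∀ i, F JM i = Eps i * L i ^ (1/P) := by
        intro i
        simp only [hFdef]
        rw [if_neg (lt_irrefl JM)]
      have hptwise : ∀ i, A i ≤ ∑ j ∈ Finset.range (JM + 1), F j i := by
        intro i
        rw [Finset.sum_range_succ, hFtop i, Finset.sum_congr rfl (hFlt i)]
        by_cases hmem : (D.get i).2.2 ∈ E
        · have hsuff : ENNReal.ofReal (c (D.get i).2.2)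
              ≤ (∑ j ∈ Finset.range JM, B j i) + Eps i := by
            have hle1 : ENNReal.ofReal (c (D.get i).2.2)
                ≤ (∑ j ∈ Finset.range (Jf (D.get i).2.2),
                    ENNReal.ofReal (cs j (D.get i).2.2)) + ENNReal.ofReal ε := by
              refine le_trans (ENNReal.ofReal_le_ofReal (hJf1 _ hmem)) ?_
              refine le_trans ENNReal.ofReal_add_le ?_
              refine add_le_add_left (le_of_eq ?_) _
              exact ENNReal.ofReal_sum_of_nonneg (fun j _ => hcs j _)
            have hle2 : (∑ j ∈ Finset.range (Jf (D.get i).2.2),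
                ENNReal.ofReal (cs j (D.get i).2.2)) ≤ ∑ j ∈ Finset.range JM, B j i := by
              refine le_trans (le_of_eq (Finset.sum_congr rfl fun j hj => ?_))
                (Finset.sum_le_sum_of_subset
                  (Finset.range_subset_range.mpr (hJMle _ (D.get_mem i))))
              simp only [hBdef]
              rw [if_pos ⟨hmem, Finset.mem_range.mp hj⟩]
            refine hle1.trans (add_le_add hle2 (le_of_eq ?_))
            simp only [hEdef]
            rw [if_pos hmem]
          calc A i = ENNReal.ofReal (c (D.get i).2.2) * L i ^ (1/P) := by
                simp only [hAdef]; rw [if_pos hmem]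
            _ ≤ ((∑ j ∈ Finset.range JM, B j i) + Eps i) * L i ^ (1/P) :=
                mul_le_mul_left hsuff _
            _ = (∑ j ∈ Finset.range JM, B j i * L i ^ (1/P)) + Eps i * L i ^ (1/P) := by
                rw [add_mul, Finset.sum_mul]
        · have : A i = 0 := by simp only [hAdef]; rw [if_neg hmem, zero_mul]
          rw [this]
          exact zero_le
      -- the per-j bound
      have hterm1 : ∀ j ∈ Finset.range JM,
          (∑ i : Fin D.length, (F j i) ^ P) ^ (1/P)
            ≤ Vj j ^ (1/P) + ENNReal.ofReal ε * ENNReal.ofReal ((2:ℝ)⁻¹ ^ j) := by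
        intro j hj
        have hjJM : j < JM := Finset.mem_range.mp hj
        set pred : ℝ × ℝ × ℝ → Bool :=
          fun q => decide (q.2.2 ∈ E ∩ {t | j < Jf t}) with hpred
        have hsum_eq : (∑ i : Fin D.length, (F j i) ^ P)
            = epp (E ∩ {t | j < Jf t}) (fun t => cs j t ^ P) D := by
          rw [epp_rpow_eq_sum hP (hcs j)]
          refine Finset.sum_congr rfl fun i _ => ?_
          congr 1
          rw [hFlt i j hj]
          congr 1
          simp only [hBdef]
          by_cases hm : (D.get i).2.2 ∈ E ∧ j < Jf (D.get i).2.2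
          · rw [if_pos (show (D.get i).2.2 ∈ E ∩ {t | j < Jf t} from hm), if_pos hm]
          · rw [if_neg (show (D.get i).2.2 ∉ E ∩ {t | j < Jf t} from hm), if_neg hm]
        have hfilter : epp (E ∩ {t | j < Jf t}) (fun t => cs j t ^ P) (D.filter pred)
            = epp (E ∩ {t | j < Jf t}) (fun t => cs j t ^ P) D := by
          refine epp_filter_eq fun q hq hfalse => ?_
          simpa [hpred] using hfalse
        have hfine' : IsFine (δs j).1 (D.filter pred) := by
          refine isFine_mono (fun q hq => hFine q (List.mem_of_mem_filter hq)) ?_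
          intro q hq
          have hmem : q.2.2 ∈ E ∩ {t | j < Jf t} := by
            have h4 := List.of_mem_filter hq
            simpa [hpred] using h4
          exact hδle q.2.2 j hmem.2
        calc (∑ i : Fin D.length, (F j i) ^ P) ^ (1/P)
            = (epp (E ∩ {t | j < Jf t}) (fun t => cs j t ^ P) (D.filter pred)) ^ (1/P) := by
              rw [hsum_eq, hfilter]
          _ ≤ ((Vj j ^ (1/P) + ENNReal.ofReal (ε * 2⁻¹ ^ j)) ^ P) ^ (1/P) := by
              refine ENNReal.rpow_le_rpow ?_ hP'.le
              refine le_trans (epp_mono Set.inter_subset_left (fun t _ => le_refl _)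
                (fun t => Real.rpow_nonneg (hcs j t) P)
                (fun q hq => hD q (List.mem_of_mem_filter hq))) ?_
              exact hδs j _ (isPP_filter hPP pred) hfine'
          _ = Vj j ^ (1/P) + ENNReal.ofReal (ε * 2⁻¹ ^ j) := rpow_inv_rpow hP
          _ = Vj j ^ (1/P) + ENNReal.ofReal ε * ENNReal.ofReal ((2:ℝ)⁻¹ ^ j) := by
              rw [ENNReal.ofReal_mul hε.le]
      -- the ε-term bound
      have hterm2 : (∑ i : Fin D.length, (F JM i) ^ P) ^ (1/P)
          ≤ ENNReal.ofReal ε * ENNReal.ofReal (b - a) ^ (1/P) := by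
        have hFle : ∀ i : Fin D.length, (F JM i) ^ P ≤ ENNReal.ofReal ε ^ P * L i := by
          intro i
          rw [hFtop i]
          have h5 : Eps i ≤ ENNReal.ofReal ε := by
            simp only [hEdef]
            split_ifs
            · exact le_refl _
            · exact zero_le
          calc (Eps i * L i ^ (1/P)) ^ P ≤ (ENNReal.ofReal ε * L i ^ (1/P)) ^ P :=
                ENNReal.rpow_le_rpow (mul_le_mul_left h5 _) hP.le
            _ = ENNReal.ofReal ε ^ P * L i := by
                rw [ENNReal.mul_rpow_of_nonneg _ _ hP.le, rpow_rpow_inv hP]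
        have hLsum : (∑ i : Fin D.length, L i) ≤ ENNReal.ofReal (b - a) := by
          rw [hLdef, ← list_sum_eq_fin D (fun q => ENNReal.ofReal (q.2.1 - q.1))]
          exact length_sum_le hPP
        calc (∑ i : Fin D.length, (F JM i) ^ P) ^ (1/P)
            ≤ (∑ i : Fin D.length, ENNReal.ofReal ε ^ P * L i) ^ (1/P) :=
              ENNReal.rpow_le_rpow (Finset.sum_le_sum fun i _ => hFle i) hP'.le
          _ = (ENNReal.ofReal ε ^ P * ∑ i : Fin D.length, L i) ^ (1/P) := by
              rw [Finset.mul_sum]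
          _ ≤ (ENNReal.ofReal ε ^ P * ENNReal.ofReal (b - a)) ^ (1/P) :=
              ENNReal.rpow_le_rpow (mul_le_mul_right hLsum _) hP'.le
          _ = ENNReal.ofReal ε * ENNReal.ofReal (b - a) ^ (1/P) := by
              rw [ENNReal.mul_rpow_of_nonneg _ _ hP'.le, rpow_inv_rpow hP]
      -- assemble
      calc (epp E (fun t => c t ^ P) D) ^ (1/P)
          = (∑ i : Fin D.length, (A i) ^ P) ^ (1/P) := by
            rw [epp_rpow_eq_sum hP hc]
        _ ≤ (∑ i : Fin D.length, (∑ j ∈ Finset.range (JM + 1), F j i) ^ P) ^ (1/P) :=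
            ENNReal.rpow_le_rpow (Finset.sum_le_sum fun i _ =>
              ENNReal.rpow_le_rpow (hptwise i) hP.le) hP'.le
        _ ≤ ∑ j ∈ Finset.range (JM + 1), (∑ i : Fin D.length, (F j i) ^ P) ^ (1/P) :=
            EMink hp Finset.univ (JM + 1) F
        _ = (∑ j ∈ Finset.range JM, (∑ i : Fin D.length, (F j i) ^ P) ^ (1/P))
              + (∑ i : Fin D.length, (F JM i) ^ P) ^ (1/P) := Finset.sum_range_succ _ _
        _ ≤ (∑ j ∈ Finset.range JM, (Vj j ^ (1/P) + ENNReal.ofReal ε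
              * ENNReal.ofReal ((2:ℝ)⁻¹ ^ j)))
              + ENNReal.ofReal ε * ENNReal.ofReal (b - a) ^ (1/P) :=
            add_le_add (Finset.sum_le_sum hterm1) hterm2
        _ ≤ (S + ENNReal.ofReal ε * 2) + ENNReal.ofReal ε * ENNReal.ofReal (b - a) ^ (1/P) := by
            refine add_le_add_left ?_ _
            rw [Finset.sum_add_distrib]
            refine add_le_add ?_ ?_
            · rw [hS]
              exact ENNReal.sum_le_tsum _
            · rw [← Finset.mul_sum]
              refine mul_le_mul_right ?_ _
              refine le_trans (ENNReal.sum_le_tsum _) (le_of_eq tsum_ofReal_geom)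
        _ = S + ENNReal.ofReal ε * CC := by
            rw [hCC, mul_add, add_assoc]
    calc epp E (fun t => c t ^ P) D
        = ((epp E (fun t => c t ^ P) D) ^ (1/P)) ^ P := (rpow_rpow_inv hP).symm
      _ ≤ (S + ENNReal.ofReal ε * CC) ^ P := ENNReal.rpow_le_rpow key hP.le
  calc (V a b (fun t => c t ^ P) E) ^ (1/P)
      ≤ ((S + ENNReal.ofReal ε * CC) ^ P) ^ (1/P) := ENNReal.rpow_le_rpow hmain hP'.le
    _ = S + ENNReal.ofReal ε * CC := rpow_inv_rpow hP

end Stmt18Aux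
namespace Stmt18Aux

open scoped Classical

lemma V_zero (a b : ℝ) (E : Set ℝ) : V a b (fun _ => (0:ℝ)) E = 0 := by
  refine le_antisymm ?_ (zero_le)
  refine le_trans (V_le_gauge a b (fun _ => le_refl 0) E ⟨fun _ => 1, fun _ => one_pos⟩) ?_
  refine iSup_le fun D => le_of_eq ?_
  simp [epp]

lemma V_empty (a b : ℝ) {c : ℝ → ℝ} (hc : ∀ t, 0 ≤ c t) : V a b c ∅ = 0 := by
  refine le_antisymm ?_ (zero_le)
  refine le_trans (V_le_gauge a b hc ∅ ⟨fun _ => 1, fun _ => one_pos⟩) ?_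
  refine iSup_le fun D => le_of_eq ?_
  simp [epp]

lemma V_union_le (a b : ℝ) {c : ℝ → ℝ} (hc : ∀ t, 0 ≤ c t) (E1 E2 : Set ℝ) :
    V a b c (E1 ∪ E2) ≤ V a b c E1 + V a b c E2 := by
  set Es : ℕ → Set ℝ := fun k => if k = 0 then E1 else if k = 1 then E2 else ∅ with hEs
  have hU : E1 ∪ E2 = ⋃ k, Es k := by
    ext t
    constructor
    · rintro (h | h)
      · exact Set.mem_iUnion.mpr ⟨0, h⟩
      · exact Set.mem_iUnion.mpr ⟨1, h⟩
    · intro h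
      obtain ⟨k, hk⟩ := Set.mem_iUnion.mp h
      simp only [hEs] at hk
      split_ifs at hk with h0 h1
      · exact Or.inl hk
      · exact Or.inr hk
      · exact absurd hk (Set.notMem_empty t)
  rw [hU]
  refine le_trans (V_iUnion_le a b hc Es) ?_
  rw [tsum_eq_sum (s := {0, 1}) ?_]
  · rw [Finset.sum_insert (by norm_num), Finset.sum_singleton]
    simp only [hEs]
    norm_num
  · intro k hk
    have h0 : k ≠ 0 := by rintro rfl; simp at hk
    have h1 : k ≠ 1 := by rintro rfl; simp at hk
    simp only [hEs, if_neg h0, if_neg h1]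
    exact V_empty a b hc

lemma V_null_of_one_null {a b : ℝ} {F : Set ℝ} (h1 : V a b (fun _ => (1:ℝ)) F = 0)
    {c : ℝ → ℝ} (hc : ∀ t, 0 ≤ c t) : V a b c F = 0 := by
  have hcover : F ⊆ ⋃ M : ℕ, (F ∩ {t | c t ≤ M}) := by
    intro t ht
    exact Set.mem_iUnion.mpr ⟨⌈c t⌉₊, ⟨ht, show c t ≤ (⌈c t⌉₊ : ℝ) from Nat.le_ceil _⟩⟩
  refine le_antisymm ?_ (zero_le)
  calc V a b c F ≤ V a b c (⋃ M : ℕ, (F ∩ {t | c t ≤ M})) :=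
        V_mono a b hc (fun t _ => le_refl _) hcover
    _ ≤ ∑' M : ℕ, V a b c (F ∩ {t | c t ≤ M}) := V_iUnion_le a b hc _
    _ ≤ ∑' M : ℕ, (0:ℝ≥0∞) := by
        refine ENNReal.tsum_le_tsum fun M => ?_
        calc V a b c (F ∩ {t | c t ≤ M})
            ≤ V a b (fun _ => (M:ℝ) * 1) F := by
              refine V_mono a b (fun t => by positivity) ?_ Set.inter_subset_left
              intro t ht
              have := ht.2
              simpa using this
          _ ≤ ENNReal.ofReal (M:ℝ) * V a b (fun _ => (1:ℝ)) F :=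
              V_smul a b (Nat.cast_nonneg M) (fun _ => zero_le_one)
          _ = 0 := by rw [h1, mul_zero]
    _ = 0 := by simp

/-- Binary triangle (Minkowski) inequality for `V ^ (1/P)`. -/
lemma V_triangle (a b : ℝ) {P : ℝ} (hp : 1 ≤ P) {E : Set ℝ} {c c1 c2 : ℝ → ℝ}
    (hc : ∀ t, 0 ≤ c t) (hc1 : ∀ t, 0 ≤ c1 t) (hc2 : ∀ t, 0 ≤ c2 t)
    (hle : ∀ t ∈ E, c t ≤ c1 t + c2 t) :
    (V a b (fun t => c t ^ P) E) ^ (1/P)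
      ≤ (V a b (fun t => c1 t ^ P) E) ^ (1/P) + (V a b (fun t => c2 t ^ P) E) ^ (1/P) := by
  have hP : 0 < P := lt_of_lt_of_le zero_lt_one hp
  set cs : ℕ → ℝ → ℝ := fun j => if j = 0 then c1 else if j = 1 then c2 else (fun _ => 0)
    with hcs
  have hcs0 : ∀ j t, 0 ≤ cs j t := by
    intro j t
    simp only [hcs]
    split_ifs
    · exact hc1 t
    · exact hc2 t
    · exact le_refl 0
  have happ : ∀ t ∈ E, ∀ ε : ℝ, 0 < ε → ∃ J, c t ≤ (∑ j ∈ Finset.range J, cs j t) + ε := by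
    intro t ht ε hε
    refine ⟨2, ?_⟩
    have h2 : (∑ j ∈ Finset.range 2, cs j t) = c1 t + c2 t := by
      rw [Finset.sum_range_succ, Finset.sum_range_one]
      simp [hcs]
    rw [h2]
    linarith [hle t ht]
  refine le_trans (V_rpow_le_tsum a b hp hc hcs0 happ) ?_
  rw [tsum_eq_sum (s := {0, 1}) ?_]
  · rw [Finset.sum_insert (by norm_num), Finset.sum_singleton]
    refine add_le_add (le_of_eq ?_) (le_of_eq ?_)
    · simp [hcs]
    · simp [hcs]
  · intro j hj
    have h0 : j ≠ 0 := by rintro rfl; simp at hj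
    have h1 : j ≠ 1 := by rintro rfl; simp at hj
    have hz : (fun t => cs j t ^ P) = (fun _ : ℝ => (0:ℝ)) := by
      funext t
      simp only [hcs, if_neg h0, if_neg h1]
      exact Real.zero_rpow hP.ne'
    rw [hz, V_zero]
    exact ENNReal.zero_rpow_of_pos (by positivity)

lemma seminorm_triangle {X : Type*} [AddCommGroup X] [Module ℝ X] (ρ : Seminorm ℝ X)
    (x y z : X) : ρ (x - z) ≤ ρ (x - y) + ρ (y - z) := by
  have h : x - z = (x - y) + (y - z) := by abel
  rw [h]
  exact map_add_le_add ρ _ _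

lemma seminorm_telescope {X : Type*} [AddCommGroup X] [Module ℝ X] (ρ : Seminorm ℝ X)
    (u : ℕ → X) (i : ℕ) : ∀ j, i ≤ j →
      ρ (u i - u j) ≤ ∑ l ∈ Finset.Ico i j, ρ (u (l+1) - u l) := by
  intro j hij
  induction j, hij using Nat.le_induction with
  | base => rw [sub_self, map_zero, Finset.Ico_self, Finset.sum_empty]
  | succ j hij ih =>
    have h1 : ρ (u i - u (j+1)) ≤ ρ (u i - u j) + ρ (u (j+1) - u j) := by
      have e : ρ (u j - u (j+1)) = ρ (u (j+1) - u j) := map_sub_rev ρ _ _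
      have h2 := seminorm_triangle ρ (u i) (u j) (u (j+1))
      rw [e] at h2
      exact h2
    rw [Finset.sum_Ico_succ_top hij]
    linarith

lemma geom_Ico_le (i j : ℕ) : (∑ l ∈ Finset.Ico i j, ((2:ℝ)⁻¹) ^ l) ≤ (2:ℝ)⁻¹ ^ i * 2 := by
  rw [Finset.sum_Ico_eq_sum_range]
  have h1 : ∀ l : ℕ, ((2:ℝ)⁻¹) ^ (i + l) = (2:ℝ)⁻¹ ^ i * (2:ℝ)⁻¹ ^ l := fun l => pow_add _ _ _
  rw [Finset.sum_congr rfl fun l _ => h1 l, ← Finset.mul_sum]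
  refine mul_le_mul_of_nonneg_left ?_ (by positivity)
  refine le_trans (Summable.sum_le_tsum (Finset.range (j - i)) (fun l _ => by positivity)
    (summable_geometric_of_lt_one (by norm_num) (by norm_num))) ?_
  rw [tsum_geometric_of_lt_one (by norm_num) (by norm_num)]
  norm_num

end Stmt18Aux
open Stmt18Aux in
/-- completeness of `U^p_ρ([a,b];X)` when `(X,ρ)` is sequentially
complete: every Cauchy sequence converges in the `U^p_ρ`-seminorm. -/
theorem stmt18 {X : Type*} [AddCommGroup X] [Module ℝ X] (ρ : Seminorm ℝ X)
    (hX : ∀ u : ℕ → X,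
      (∀ ε : ℝ, 0 < ε → ∃ N : ℕ, ∀ m ≥ N, ∀ n ≥ N, ρ (u m - u n) < ε) →
      ∃ x : X, ∀ ε : ℝ, 0 < ε → ∃ N : ℕ, ∀ n ≥ N, ρ (u n - x) < ε)
    (a b : ℝ) (p : ℝ) (hp : 1 ≤ p) (f : ℕ → ℝ → X)
    (hfin : ∀ n, varThetaP a b ρ p (f n) (Set.Icc a b) ≠ ⊤)
    (hcauchy : ∀ ε : ℝ, 0 < ε → ∃ N : ℕ, ∀ m ≥ N, ∀ n ≥ N,
      UNorm a b ρ p (f m - f n) (Set.Icc a b) < ENNReal.ofReal ε) :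
    ∃ g : ℝ → X, varThetaP a b ρ p g (Set.Icc a b) ≠ ⊤ ∧
      Filter.Tendsto (fun n => UNorm a b ρ p (f n - g) (Set.Icc a b))
        Filter.atTop (nhds 0) := by
  classical
  have hp0 : 0 < p := lt_of_lt_of_le zero_lt_one hp
  have hp0' : 0 < 1/p := by positivity
  set A : Set ℝ := Set.Icc a b with hA
  -- identification of UNorm/varThetaP with V
  have hTV : ∀ (h : ℝ → X) (E : Set ℝ), varThetaP a b ρ p h E
      = V a b (fun t => ρ (h t) ^ p) E := fun _ _ => rfl
  have hUV : ∀ (h : ℝ → X) (E : Set ℝ), UNorm a b ρ p h E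
      = (V a b (fun t => ρ (h t) ^ p) E) ^ (1/p) := fun _ _ => rfl
  have hsubV : ∀ (u v : ℝ → X) (E : Set ℝ),
      V a b (fun t => ρ ((u - v) t) ^ p) E = V a b (fun t => ρ (u t - v t) ^ p) E :=
    fun _ _ _ => rfl
  -- choose Cauchy thresholds
  have hNch : ∀ j : ℕ, ∃ N : ℕ, ∀ m ≥ N, ∀ k ≥ N,
      UNorm a b ρ p (f m - f k) A < ENNReal.ofReal ((4:ℝ)⁻¹ ^ j) :=
    fun j => hcauchy _ (by positivity)
  choose N hN using hNch
  -- monotone subsequence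
  set n : ℕ → ℕ := fun j => Nat.rec (N 0) (fun j nj => max (N (j+1)) (nj + 1)) j with hn
  have hn0 : ∀ j, N j ≤ n j := by
    intro j
    cases j with
    | zero => exact le_refl _
    | succ j => exact le_max_left _ _
  have hnsucc : ∀ j, n j < n (j+1) :=
    fun j => lt_of_lt_of_le (Nat.lt_succ_self _) (le_max_right _ _)
  have hnmono : ∀ i j, i ≤ j → n i ≤ n j := by
    intro i j hij
    induction j, hij using Nat.le_induction with
    | base => exact le_refl _
    | succ j hij ih => exact le_trans ih (hnsucc j).le
  -- successive differences
  set cj : ℕ → ℝ → ℝ := fun j t => ρ (f (n (j+1)) t - f (n j) t) with hcj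
  have hcj0 : ∀ j t, 0 ≤ cj j t := fun j t => apply_nonneg ρ _
  have hVcj : ∀ j, V a b (fun t => cj j t ^ p) A < (ENNReal.ofReal ((4:ℝ)⁻¹ ^ j)) ^ p := by
    intro j
    have h1 : UNorm a b ρ p (f (n (j+1)) - f (n j)) A < ENNReal.ofReal ((4:ℝ)⁻¹ ^ j) :=
      hN j _ (le_trans (hn0 j) (hnsucc j).le) _ (hn0 j)
    rw [hUV, hsubV] at h1
    calc V a b (fun t => cj j t ^ p) A
        = ((V a b (fun t => cj j t ^ p) A) ^ (1/p)) ^ p := (rpow_rpow_inv hp0).symm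
      _ < (ENNReal.ofReal ((4:ℝ)⁻¹ ^ j)) ^ p := ENNReal.rpow_lt_rpow h1 hp0
  have hVcj' : ∀ j, (V a b (fun t => cj j t ^ p) A) ^ (1/p)
      ≤ ENNReal.ofReal ((4:ℝ)⁻¹ ^ j) := by
    intro j
    calc (V a b (fun t => cj j t ^ p) A) ^ (1/p)
        ≤ ((ENNReal.ofReal ((4:ℝ)⁻¹ ^ j)) ^ p) ^ (1/p) :=
          ENNReal.rpow_le_rpow (hVcj j).le hp0'.le
      _ = ENNReal.ofReal ((4:ℝ)⁻¹ ^ j) := rpow_inv_rpow hp0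
  -- bad sets via Chebyshev
  set Ebad : ℕ → Set ℝ := fun j => {t | t ∈ A ∧ (2:ℝ)⁻¹ ^ j ≤ cj j t} with hEbad
  have hVE : ∀ j, V a b (fun _ => (1:ℝ)) (Ebad j) ≤ ENNReal.ofReal ((2:ℝ)⁻¹ ^ j) := by
    intro j
    have hstep1 : V a b (fun _ => (1:ℝ)) (Ebad j)
        ≤ V a b (fun t => ((2:ℝ)^j) ^ p * cj j t ^ p) (Ebad j) := by
      refine V_mono a b (fun t => mul_nonneg (Real.rpow_nonneg (by positivity) p)
        (Real.rpow_nonneg (hcj0 j t) p)) ?_ (le_refl _)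
      intro t ht
      have h6 : (1:ℝ) ≤ (2:ℝ)^j * cj j t := by
        have h7 : (2:ℝ)⁻¹ ^ j ≤ cj j t := ht.2
        have h8 : (1:ℝ) = 2^j * 2⁻¹^j := by
          rw [← mul_pow]
          norm_num
        rw [h8]
        exact mul_le_mul_of_nonneg_left h7 (by positivity)
      calc (1:ℝ) = 1 ^ p := (Real.one_rpow p).symm
        _ ≤ ((2:ℝ)^j * cj j t) ^ p := Real.rpow_le_rpow (by norm_num) h6 hp0.le
        _ = ((2:ℝ)^j)^p * cj j t ^ p := Real.mul_rpow (by positivity) (hcj0 j t)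
    have hstep2 := V_smul a b (E := Ebad j) (r := ((2:ℝ)^j) ^ p)
      (c := fun t => cj j t ^ p) (Real.rpow_nonneg (by positivity) p)
      (fun t => Real.rpow_nonneg (hcj0 j t) p)
    have hstep3 : V a b (fun t => cj j t ^ p) (Ebad j) ≤ V a b (fun t => cj j t ^ p) A :=
      V_mono a b (fun t => Real.rpow_nonneg (hcj0 j t) p) (fun t _ => le_refl _)
        (fun t ht => ht.1)
    calc V a b (fun _ => (1:ℝ)) (Ebad j)
        ≤ V a b (fun t => ((2:ℝ)^j) ^ p * cj j t ^ p) (Ebad j) := hstep1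
      _ ≤ ENNReal.ofReal (((2:ℝ)^j) ^ p) * V a b (fun t => cj j t ^ p) (Ebad j) := hstep2
      _ ≤ ENNReal.ofReal (((2:ℝ)^j) ^ p) * (ENNReal.ofReal ((4:ℝ)⁻¹ ^ j)) ^ p :=
          mul_le_mul_right (le_trans hstep3 (hVcj j).le) _
      _ = ENNReal.ofReal (((2:ℝ)^j) ^ p) * ENNReal.ofReal (((4:ℝ)⁻¹ ^ j) ^ p) := by
          rw [ENNReal.ofReal_rpow_of_nonneg (by positivity) hp0.le]
      _ = ENNReal.ofReal (((2:ℝ)^j * (4:ℝ)⁻¹^j) ^ p) := by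
          rw [← ENNReal.ofReal_mul (Real.rpow_nonneg (by positivity) p),
            ← Real.mul_rpow (by positivity) (by positivity)]
      _ = ENNReal.ofReal (((2:ℝ)⁻¹ ^ j) ^ p) := by
          congr 2
          rw [← mul_pow]
          norm_num
      _ ≤ ENNReal.ofReal ((2:ℝ)⁻¹ ^ j) := by
          refine ENNReal.ofReal_le_ofReal ?_
          have h9 : ((2:ℝ)⁻¹ ^ j) ^ p ≤ ((2:ℝ)⁻¹ ^ j) ^ (1:ℝ) :=
            Real.rpow_le_rpow_of_exponent_ge (by positivity)
              (pow_le_one₀ (by norm_num) (by norm_num)) hp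
          rwa [Real.rpow_one] at h9
  -- the exceptional set
  set F : Set ℝ := ⋂ K : ℕ, ⋃ j : ℕ, Ebad (K + j) with hF
  have hVF : V a b (fun _ => (1:ℝ)) F = 0 := by
    have hKb : ∀ K : ℕ, V a b (fun _ => (1:ℝ)) F ≤ ENNReal.ofReal ((2:ℝ)⁻¹ ^ K) * 2 := by
      intro K
      calc V a b (fun _ => (1:ℝ)) F ≤ V a b (fun _ => (1:ℝ)) (⋃ j, Ebad (K + j)) :=
            V_mono a b (fun _ => zero_le_one) (fun _ _ => le_refl _) (Set.iInter_subset _ K)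
        _ ≤ ∑' j, V a b (fun _ => (1:ℝ)) (Ebad (K + j)) :=
            V_iUnion_le a b (fun _ => zero_le_one) _
        _ ≤ ∑' j, ENNReal.ofReal ((2:ℝ)⁻¹ ^ K) * ENNReal.ofReal ((2:ℝ)⁻¹ ^ j) := by
            refine ENNReal.tsum_le_tsum fun j => le_trans (hVE (K + j)) (le_of_eq ?_)
            rw [pow_add, ENNReal.ofReal_mul (by positivity)]
        _ = ENNReal.ofReal ((2:ℝ)⁻¹ ^ K) * ∑' j, ENNReal.ofReal ((2:ℝ)⁻¹ ^ j) :=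
            ENNReal.tsum_mul_left
        _ = ENNReal.ofReal ((2:ℝ)⁻¹ ^ K) * 2 := by rw [tsum_ofReal_geom]
    refine le_antisymm ?_ (zero_le)
    refine le_of_forall_eps_mul (C := 2) (by norm_num) fun ε hε => ?_
    obtain ⟨K, hK⟩ := exists_pow_lt_of_lt_one hε (by norm_num : (2:ℝ)⁻¹ < 1)
    calc V a b (fun _ => (1:ℝ)) F ≤ ENNReal.ofReal ((2:ℝ)⁻¹ ^ K) * 2 := hKb K
      _ ≤ ENNReal.ofReal ε * 2 := mul_le_mul_left (ENNReal.ofReal_le_ofReal hK.le) _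
      _ = 0 + ENNReal.ofReal ε * 2 := (zero_add _).symm
  have hFnull : ∀ c : ℝ → ℝ, (∀ t, 0 ≤ c t) → V a b c F = 0 :=
    fun c hc => V_null_of_one_null hVF hc
  -- good points: tail decay
  have hgood : ∀ t, t ∈ A → t ∉ F → ∃ K, ∀ l, K ≤ l → cj l t < (2:ℝ)⁻¹ ^ l := by
    intro t ht htF
    rw [hF, Set.mem_iInter] at htF
    push_neg at htF
    obtain ⟨K, hK⟩ := htF
    rw [Set.mem_iUnion] at hK
    push_neg at hK
    refine ⟨K, fun l hl => ?_⟩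
    have h7 := hK (l - K)
    rw [Nat.add_sub_cancel' hl] at h7
    by_contra hcon
    push_neg at hcon
    exact h7 ⟨ht, hcon⟩
  -- pointwise ρ-Cauchy on good points, with limit
  have hCauchyPt : ∀ t, t ∈ A → t ∉ F → ∃ x : X, ∀ ε : ℝ, 0 < ε →
      ∃ M : ℕ, ∀ j ≥ M, ρ (f (n j) t - x) < ε := by
    intro t ht htF
    obtain ⟨K, hK⟩ := hgood t ht htF
    refine hX (fun j => f (n j) t) ?_
    intro ε hε
    obtain ⟨M, hM⟩ := exists_pow_lt_of_lt_one (show (0:ℝ) < ε/2 by positivity)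
      (by norm_num : (2:ℝ)⁻¹ < 1)
    have key : ∀ i j : ℕ, max K M ≤ i → i ≤ j → ρ (f (n i) t - f (n j) t) < ε := by
      intro i j hi hij
      calc ρ (f (n i) t - f (n j) t)
          ≤ ∑ l ∈ Finset.Ico i j, ρ (f (n (l+1)) t - f (n l) t) :=
            seminorm_telescope ρ (fun j => f (n j) t) i j hij
        _ ≤ ∑ l ∈ Finset.Ico i j, (2:ℝ)⁻¹ ^ l := by
            refine Finset.sum_le_sum fun l hl => ?_
            exact (hK l (le_trans (le_trans (le_max_left _ _) hi)
              (Finset.mem_Ico.mp hl).1)).le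
        _ ≤ (2:ℝ)⁻¹ ^ i * 2 := geom_Ico_le i j
        _ ≤ (2:ℝ)⁻¹ ^ M * 2 := by
            refine mul_le_mul_of_nonneg_right ?_ (by norm_num)
            exact pow_le_pow_of_le_one (by norm_num) (by norm_num)
              (le_trans (le_max_right _ _) hi)
        _ < ε := by linarith
    refine ⟨max K M, fun i hi j hj => ?_⟩
    rcases le_total i j with h | h
    · exact key i j hi h
    · rw [map_sub_rev]
      exact key j i hj h
  -- the limit function
  set g : ℝ → X := fun t => if h : t ∈ A ∧ t ∉ F then (hCauchyPt t h.1 h.2).choose else 0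
    with hg
  have hglim : ∀ t, t ∈ A → t ∉ F → ∀ ε : ℝ, 0 < ε →
      ∃ M : ℕ, ∀ j ≥ M, ρ (f (n j) t - g t) < ε := by
    intro t h1 h2
    have hgt : g t = (hCauchyPt t h1 h2).choose := by
      rw [hg]
      simp only [dif_pos (And.intro h1 h2)]
    rw [hgt]
    exact (hCauchyPt t h1 h2).choose_spec
  -- key tail estimate on the good set
  have hKey : ∀ K : ℕ, (V a b (fun t => ρ (f (n K) t - g t) ^ p) (A \ F)) ^ (1/p)
      ≤ ENNReal.ofReal ((4:ℝ)⁻¹ ^ K) * 2 := by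
    intro K
    have happ : ∀ t ∈ A \ F, ∀ ε : ℝ, 0 < ε →
        ∃ J, ρ (f (n K) t - g t) ≤ (∑ j ∈ Finset.range J, cj (K + j) t) + ε := by
      intro t ht ε hε
      obtain ⟨M, hM⟩ := hglim t ht.1 ht.2 ε hε
      set j0 := max M K with hj0
      have hj0K : K ≤ j0 := le_max_right _ _
      refine ⟨j0 - K, ?_⟩
      have h8 : ρ (f (n K) t - g t) ≤ ρ (f (n K) t - f (n j0) t) + ρ (f (n j0) t - g t) :=
        seminorm_triangle ρ _ _ _
      have h9 : ρ (f (n K) t - f (n j0) t) ≤ ∑ l ∈ Finset.Ico K j0, cj l t :=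
        seminorm_telescope ρ (fun j => f (n j) t) K j0 hj0K
      have h10 : (∑ l ∈ Finset.Ico K j0, cj l t)
          = ∑ j ∈ Finset.range (j0 - K), cj (K + j) t :=
        Finset.sum_Ico_eq_sum_range (fun l => cj l t) K j0
      have h11 : ρ (f (n j0) t - g t) < ε := hM j0 (le_max_left _ _)
      rw [← h10]
      linarith
    calc (V a b (fun t => ρ (f (n K) t - g t) ^ p) (A \ F)) ^ (1/p)
        ≤ ∑' j, (V a b (fun t => cj (K + j) t ^ p) (A \ F)) ^ (1/p) :=
          V_rpow_le_tsum a b hp (fun t => apply_nonneg ρ _) (fun j t => hcj0 _ _) happ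
      _ ≤ ∑' j, ENNReal.ofReal ((2:ℝ)⁻¹ ^ j) * ENNReal.ofReal ((4:ℝ)⁻¹ ^ K) := by
          refine ENNReal.tsum_le_tsum fun j => ?_
          have h12 : (V a b (fun t => cj (K + j) t ^ p) (A \ F)) ^ (1/p)
              ≤ ENNReal.ofReal ((4:ℝ)⁻¹ ^ (K + j)) := by
            refine le_trans (ENNReal.rpow_le_rpow (V_mono a b
              (fun t => Real.rpow_nonneg (hcj0 _ t) p) (fun t _ => le_refl _)
              Set.diff_subset) hp0'.le) (hVcj' (K + j))
          refine le_trans h12 ?_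
          rw [pow_add, ENNReal.ofReal_mul (by positivity), mul_comm]
          refine mul_le_mul_left (ENNReal.ofReal_le_ofReal ?_) _
          exact pow_le_pow_left₀ (by norm_num) (by norm_num) j
      _ = ENNReal.ofReal ((4:ℝ)⁻¹ ^ K) * 2 := by
          rw [ENNReal.tsum_mul_right, tsum_ofReal_geom, mul_comm]
  -- splitting over A = (A \ F) ∪ (A ∩ F)
  have hsplit : ∀ c : ℝ → ℝ, (∀ t, 0 ≤ c t) →
      (V a b c A) ^ (1/p) ≤ (V a b c (A \ F)) ^ (1/p) + (V a b c (A ∩ F)) ^ (1/p) := by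
    intro c hc
    have hAsub : A ⊆ (A \ F) ∪ (A ∩ F) := by
      intro t ht
      by_cases h : t ∈ F
      · exact Or.inr ⟨ht, h⟩
      · exact Or.inl ⟨ht, h⟩
    calc (V a b c A) ^ (1/p) ≤ (V a b c ((A \ F) ∪ (A ∩ F))) ^ (1/p) :=
          ENNReal.rpow_le_rpow (V_mono a b hc (fun _ _ => le_refl _) hAsub) hp0'.le
      _ ≤ (V a b c (A \ F) + V a b c (A ∩ F)) ^ (1/p) :=
          ENNReal.rpow_le_rpow (V_union_le a b hc _ _) hp0'.le
      _ ≤ (V a b c (A \ F)) ^ (1/p) + (V a b c (A ∩ F)) ^ (1/p) :=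
          ENNReal.rpow_add_le_add_rpow _ _ hp0'.le (by rw [div_le_one hp0]; exact hp)
  have hinterF : ∀ c : ℝ → ℝ, (∀ t, 0 ≤ c t) → V a b c (A ∩ F) = 0 := by
    intro c hc
    refine le_antisymm (le_trans (V_mono a b hc (fun _ _ => le_refl _)
      Set.inter_subset_right) (le_of_eq (hFnull c hc))) (zero_le)
  -- main bound for m ≥ n K
  have hbound : ∀ K : ℕ, ∀ m : ℕ, n K ≤ m →
      UNorm a b ρ p (f m - g) A ≤ ENNReal.ofReal ((4:ℝ)⁻¹ ^ K) * 3 := by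
    intro K m hm
    have hc0 : ∀ t, 0 ≤ ρ (f m t - g t) := fun t => apply_nonneg ρ _
    rw [hUV, hsubV]
    have h13 := hsplit (fun t => ρ (f m t - g t) ^ p) (fun t => Real.rpow_nonneg (hc0 t) p)
    rw [hinterF _ (fun t => Real.rpow_nonneg (hc0 t) p),
      ENNReal.zero_rpow_of_pos hp0', add_zero] at h13
    refine le_trans h13 ?_
    have htri := V_triangle a b hp (E := A \ F) (c := fun t => ρ (f m t - g t))
      (c1 := fun t => ρ (f m t - f (n K) t)) (c2 := fun t => ρ (f (n K) t - g t))
      hc0 (fun t => apply_nonneg ρ _) (fun t => apply_nonneg ρ _)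
      (fun t _ => seminorm_triangle ρ _ _ _)
    refine le_trans htri ?_
    have hterm1 : (V a b (fun t => ρ (f m t - f (n K) t) ^ p) (A \ F)) ^ (1/p)
        ≤ ENNReal.ofReal ((4:ℝ)⁻¹ ^ K) := by
      refine le_trans (ENNReal.rpow_le_rpow (V_mono a b
        (fun t => Real.rpow_nonneg (apply_nonneg ρ _) p) (fun t _ => le_refl _)
        Set.diff_subset) hp0'.le) ?_
      have h14 : UNorm a b ρ p (f m - f (n K)) A < ENNReal.ofReal ((4:ℝ)⁻¹ ^ K) :=
        hN K m (le_trans (hn0 K) hm) (n K) (hn0 K)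
      rw [hUV, hsubV] at h14
      exact h14.le
    calc (V a b (fun t => ρ (f m t - f (n K) t) ^ p) (A \ F)) ^ (1/p)
          + (V a b (fun t => ρ (f (n K) t - g t) ^ p) (A \ F)) ^ (1/p)
        ≤ ENNReal.ofReal ((4:ℝ)⁻¹ ^ K) + ENNReal.ofReal ((4:ℝ)⁻¹ ^ K) * 2 :=
          add_le_add hterm1 (hKey K)
      _ = ENNReal.ofReal ((4:ℝ)⁻¹ ^ K) * 3 := by ring
  -- g has finite seminorm
  have hgfin : varThetaP a b ρ p g A ≠ ⊤ := by
    rw [hTV]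
    have hgc : ∀ t, 0 ≤ ρ (g t) := fun t => apply_nonneg ρ _
    have h15 := hsplit (fun t => ρ (g t) ^ p) (fun t => Real.rpow_nonneg (hgc t) p)
    rw [hinterF _ (fun t => Real.rpow_nonneg (hgc t) p),
      ENNReal.zero_rpow_of_pos hp0', add_zero] at h15
    have htri := V_triangle a b hp (E := A \ F) (c := fun t => ρ (g t))
      (c1 := fun t => ρ (f (n 0) t - g t)) (c2 := fun t => ρ (f (n 0) t))
      hgc (fun t => apply_nonneg ρ _) (fun t => apply_nonneg ρ _)
      (by
        intro t _
        have e : ρ (g t - f (n 0) t) = ρ (f (n 0) t - g t) := map_sub_rev ρ _ _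
        calc ρ (g t) = ρ ((g t - f (n 0) t) + f (n 0) t) := by rw [sub_add_cancel]
          _ ≤ ρ (g t - f (n 0) t) + ρ (f (n 0) t) := map_add_le_add ρ _ _
          _ = ρ (f (n 0) t - g t) + ρ (f (n 0) t) := by rw [e])
    have hfin0 : varThetaP a b ρ p (f (n 0)) A ≠ ⊤ := hfin (n 0)
    rw [hTV] at hfin0
    have hterm2 : (V a b (fun t => ρ (f (n 0) t) ^ p) (A \ F)) ^ (1/p) ≠ ⊤ := by
      refine ENNReal.rpow_ne_top_of_nonneg hp0'.le ?_
      exact ne_top_of_le_ne_top hfin0 (V_mono a b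
        (fun t => Real.rpow_nonneg (apply_nonneg ρ _) p) (fun t _ => le_refl _)
        Set.diff_subset)
    have hterm1fin : (V a b (fun t => ρ (f (n 0) t - g t) ^ p) (A \ F)) ^ (1/p) ≠ ⊤ :=
      ne_top_of_le_ne_top (ENNReal.mul_ne_top ENNReal.ofReal_ne_top
        (by norm_num)) (hKey 0)
    have hsum : (V a b (fun t => ρ (g t) ^ p) A) ^ (1/p) ≠ ⊤ :=
      ne_top_of_le_ne_top (ENNReal.add_ne_top.mpr ⟨hterm1fin, hterm2⟩) (le_trans h15 htri)
    have h17 : ((V a b (fun t => ρ (g t) ^ p) A) ^ (1/p)) ^ p ≠ ⊤ :=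
      ENNReal.rpow_ne_top_of_nonneg hp0.le hsum
    rwa [rpow_rpow_inv hp0] at h17
  -- conclusion
  refine ⟨g, hgfin, ?_⟩
  rw [ENNReal.tendsto_atTop_zero]
  intro ε hε
  obtain ⟨K, hK⟩ : ∃ K : ℕ, ENNReal.ofReal ((4:ℝ)⁻¹ ^ K) * 3 ≤ ε := by
    by_cases htop : ε = ⊤
    · exact ⟨0, htop ▸ le_top⟩
    · have hε' : 0 < ε.toReal := ENNReal.toReal_pos hε.ne' htop
      obtain ⟨K, hK2⟩ := exists_pow_lt_of_lt_one (show (0:ℝ) < ε.toReal / 3 by positivity)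
        (by norm_num : (4:ℝ)⁻¹ < 1)
      refine ⟨K, ?_⟩
      have h16 : ENNReal.ofReal ((4:ℝ)⁻¹ ^ K * 3) = ENNReal.ofReal ((4:ℝ)⁻¹ ^ K) * 3 := by
        rw [ENNReal.ofReal_mul (by positivity), ENNReal.ofReal_ofNat]
      rw [← h16]
      calc ENNReal.ofReal ((4:ℝ)⁻¹ ^ K * 3) ≤ ENNReal.ofReal ε.toReal :=
            ENNReal.ofReal_le_ofReal (by linarith)
        _ = ε := ENNReal.ofReal_toReal htop
  exact ⟨n K, fun m hm => le_trans (hbound K m hm) hK⟩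
end
end
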